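/- arXiv:1804.10491 — 13 statements merged into one kernel-verified Lean document; each statement's English description precedes it below -/
import Mathlib

section
/- Let p be a prime and let A be the p×p matrix over F_p, with rows and columns indexed by the elements of F_p (identified with 0,1,…,p−1), defined by: A(s,s) = 0 for all s; A(s,0) = 1 for all s ≠ 0; and A(s,t) = (s−t)^{−1} (inverse computed in F_p) for all t ≠ 0 and s ≠ t. Then every 2×2 submatrix of A, obtained by selecting any two distinct rows and any two distinct columns, is invertible. -/
/-!
Every entry of `A` off the diagonal is nonzero. If the two rows and two columns share an index,
the submatrix has a zero on one diagonal and nonzero entries on the other, so its determinant is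
minus a product of nonzero entries. Otherwise, after moving the column of ones (if chosen) to the
right, the submatrix is either a Cauchy matrix `((xᵢ - yⱼ)⁻¹)`, whose determinant is
`(x₁ - x₂)(y₂ - y₁) / ∏ (xᵢ - yⱼ)`, or has the columns `((xᵢ - y)⁻¹)` and `(1, 1)`, whose
determinant vanishes only if `x₁ = x₂`.
-/

namespace Matrix

theorem det_fin_two_ne_zero_of_zero_diag_of_meets_diag {ι R : Type*} [CommRing R]
    [NoZeroDivisors R] {M : Matrix ι ι R} (hdiag : ∀ s, M s s = 0)
    (hoff : ∀ s t, s ≠ t → M s t ≠ 0) {i j k l : ι} (hij : i ≠ j) (hkl : k ≠ l)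
    (hmeet : i = k ∨ j = l ∨ i = l ∨ j = k) : !![M i k, M i l; M j k, M j l].det ≠ 0 := by
  rw [det_fin_two_of]
  rcases hmeet with rfl | rfl | rfl | rfl <;> simp [hdiag, hoff, hij, hkl, hij.symm, hkl.symm]

theorem det_fin_two_inv_sub {K : Type*} [Field K] {x₁ x₂ y₁ y₂ : K}
    (h₁₁ : x₁ ≠ y₁) (h₁₂ : x₁ ≠ y₂) (h₂₁ : x₂ ≠ y₁) (h₂₂ : x₂ ≠ y₂) :
    !![(x₁ - y₁)⁻¹, (x₁ - y₂)⁻¹; (x₂ - y₁)⁻¹, (x₂ - y₂)⁻¹].det =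
      (x₁ - x₂) * (y₂ - y₁) / ((x₁ - y₁) * (x₁ - y₂) * (x₂ - y₁) * (x₂ - y₂)) := by
  rw [det_fin_two_of]
  have := sub_ne_zero.mpr h₁₁
  have := sub_ne_zero.mpr h₁₂
  have := sub_ne_zero.mpr h₂₁
  have := sub_ne_zero.mpr h₂₂
  field_simp
  ring

theorem det_fin_two_inv_sub_one_ne_zero {K : Type*} [Field K] {x₁ x₂ : K} (hx : x₁ ≠ x₂)
    (y : K) : !![(x₁ - y)⁻¹, 1; (x₂ - y)⁻¹, 1].det ≠ 0 := by
  rw [det_fin_two_of, mul_one, one_mul, sub_ne_zero]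
  exact inv_injective.ne (sub_left_injective.ne hx)

end Matrix

/-- Every 2×2 submatrix of the matrix A of Construction 2.6 (rows and columns indexed by
F_p, A(s,s)=0, A(s,0)=1 for s ≠ 0, A(s,t)=(s−t)⁻¹ for t ≠ 0, s ≠ t) is invertible. -/
theorem construction_A_two_by_two_submatrices_invertible
    (p : ℕ) [Fact p.Prime] (A : Matrix (ZMod p) (ZMod p) (ZMod p))
    (hdiag : ∀ s : ZMod p, A s s = 0)
    (hcol : ∀ s : ZMod p, s ≠ 0 → A s 0 = 1)
    (hentry : ∀ s t : ZMod p, t ≠ 0 → s ≠ t → A s t = (s - t)⁻¹) :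
    ∀ i j k l : ZMod p, i ≠ j → k ≠ l →
      Matrix.det !![A i k, A i l; A j k, A j l] ≠ 0 := by
  intro i j k l hij hkl
  have hoff : ∀ s t, s ≠ t → A s t ≠ 0 := by
    intro s t hst
    rcases eq_or_ne t 0 with rfl | ht
    · simp [hcol s hst]
    · simpa [hentry s t ht hst] using sub_ne_zero.mpr hst
  wlog hk : k ≠ 0 generalizing k l
  · have hl : l ≠ 0 := fun hl => hk (hl ▸ hkl)
    have hswap := this l k hkl.symm hl
    rw [Matrix.det_fin_two_of] at hswap ⊢
    rw [← neg_sub]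
    exact neg_ne_zero.mpr hswap
  by_cases hmeet : i = k ∨ j = l ∨ i = l ∨ j = k
  · exact Matrix.det_fin_two_ne_zero_of_zero_diag_of_meets_diag hdiag hoff hij hkl hmeet
  simp only [not_or] at hmeet
  obtain ⟨hik, hjl, hil, hjk⟩ := hmeet
  rw [hentry i k hk hik, hentry j k hk hjk]
  rcases eq_or_ne l 0 with rfl | hl
  · rw [hcol i hil, hcol j hjl]
    exact Matrix.det_fin_two_inv_sub_one_ne_zero hij k
  · rw [hentry i l hl hil, hentry j l hl hjl, Matrix.det_fin_two_inv_sub hik hil hjk hjl]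
    refine div_ne_zero (mul_ne_zero (sub_ne_zero.mpr hij) (sub_ne_zero.mpr hkl.symm)) ?_
    simp [sub_eq_zero, hik, hil, hjk, hjl]
end

section
/- For every prime p there exists an invertible p×p matrix M over the finite field F_p such that every 2×2 submatrix of M (obtained by selecting any two rows and any two columns) is invertible; that is, a linear (2,p,p)-AONT exists for all primes p. -/
private def aontEntry (n : ℕ) (x u : ZMod (n + 2)) : ZMod (n + 2) :=
  if x = 0 then u ^ (n + 1) else (u - x) ^ n

private lemma aontEntry_zero (n : ℕ) (u : ZMod (n + 2)) :
    aontEntry n 0 u = u ^ (n + 1) := if_pos rfl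

private lemma aontEntry_ne (n : ℕ) {x : ZMod (n + 2)} (hx : x ≠ 0) (u : ZMod (n + 2)) :
    aontEntry n x u = (u - x) ^ n := if_neg hx

private lemma aont_pow_card_sub_one {n : ℕ} (hp : (n + 2).Prime)
    (a : ZMod (n + 2)) (ha : a ≠ 0) : a ^ (n + 1) = 1 := by
  haveI : Fact (n + 2).Prime := ⟨hp⟩
  have h := ZMod.pow_card_sub_one_eq_one ha
  simpa using h

private lemma aont_pow_eq_inv {n : ℕ} (hn : 1 ≤ n) (hp : (n + 2).Prime)
    (a : ZMod (n + 2)) : a ^ n = a⁻¹ := by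
  haveI : Fact (n + 2).Prime := ⟨hp⟩
  by_cases ha : a = 0
  · subst ha
    rw [zero_pow (by omega), inv_zero]
  · refine eq_inv_of_mul_eq_one_left ?_
    rw [← pow_succ]
    exact aont_pow_card_sub_one hp a ha

/-- All 2×2 minors of the AONT matrix are nonzero. -/
private lemma aont_minor_ne {n : ℕ} (hn : 1 ≤ n) (hp : (n + 2).Prime)
    (x y u v : ZMod (n + 2)) (hxy : x ≠ y) (huv : u ≠ v) :
    aontEntry n x u * aontEntry n y v - aontEntry n x v * aontEntry n y u ≠ 0 := by
  haveI : Fact (n + 2).Prime := ⟨hp⟩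
  have h1 : ∀ a : ZMod (n + 2), a ≠ 0 → a ^ (n + 1) = 1 := fun a ha =>
    aont_pow_card_sub_one hp a ha
  have h0 : (0 : ZMod (n + 2)) ^ (n + 1) = 0 := zero_pow (by omega)
  have hi : ∀ a : ZMod (n + 2), a ^ n = a⁻¹ := aont_pow_eq_inv hn hp
  by_cases hx : x = 0 <;> by_cases hy : y = 0
  · exact absurd (hx.trans hy.symm) hxy
  · -- x = 0, y ≠ 0
    subst hx
    rw [aontEntry_zero, aontEntry_zero, aontEntry_ne n hy, aontEntry_ne n hy, hi, hi]
    by_cases hu : u = 0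
    · have hv0 : v ≠ 0 := fun h => huv (hu.trans h.symm)
      rw [hu, h0, h1 v hv0, zero_mul, one_mul, zero_sub, zero_sub]
      simpa using inv_ne_zero (neg_ne_zero.mpr hy)
    · by_cases hv : v = 0
      · rw [hv, h0, h1 u hu, one_mul, zero_mul, sub_zero, zero_sub]
        exact inv_ne_zero (neg_ne_zero.mpr hy)
      · rw [h1 u hu, h1 v hv, one_mul, one_mul]
        refine sub_ne_zero.mpr fun h => huv ?_
        have h2 : v - y = u - y := inv_injective h
        exact (sub_left_inj.mp h2).symm
  · -- x ≠ 0, y = 0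
    subst hy
    rw [aontEntry_zero, aontEntry_zero, aontEntry_ne n hx, aontEntry_ne n hx, hi, hi]
    by_cases hu : u = 0
    · have hv0 : v ≠ 0 := fun h => huv (hu.trans h.symm)
      rw [hu, h0, h1 v hv0, mul_one, mul_zero, sub_zero, zero_sub]
      exact inv_ne_zero (neg_ne_zero.mpr hx)
    · by_cases hv : v = 0
      · rw [hv, h0, h1 u hu, mul_zero, mul_one, zero_sub, zero_sub]
        simpa using inv_ne_zero (neg_ne_zero.mpr hx)
      · rw [h1 u hu, h1 v hv, mul_one, mul_one]
        refine sub_ne_zero.mpr fun h => huv ?_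
        have h2 : u - x = v - x := inv_injective h
        exact sub_left_inj.mp h2
  · -- x ≠ 0, y ≠ 0
    rw [aontEntry_ne n hx, aontEntry_ne n hx, aontEntry_ne n hy, aontEntry_ne n hy,
      hi, hi, hi, hi]
    refine sub_ne_zero.mpr fun h => ?_
    rw [← mul_inv, ← mul_inv] at h
    have h2 : (u - x) * (v - y) = (v - x) * (u - y) := inv_injective h
    have h3 : (x - y) * (u - v) = 0 := by linear_combination h2
    rcases mul_eq_zero.mp h3 with h4 | h4
    · exact hxy (by linear_combination h4)
    · exact huv (by linear_combination h4)

/-- The AONT matrix has nonzero determinant. -/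
private lemma aont_det_ne {n : ℕ} (hn : 1 ≤ n) (hp : (n + 2).Prime) :
    (Matrix.of fun i j : Fin (n + 2) =>
      aontEntry n ((i : ℕ) : ZMod (n + 2)) ((j : ℕ) : ZMod (n + 2))).det ≠ 0 := by
  haveI : Fact (n + 2).Prime := ⟨hp⟩
  intro hdet
  obtain ⟨v, hvne, hv⟩ := Matrix.exists_mulVec_eq_zero_iff.mpr hdet
  set A : ℕ → ZMod (n + 2) := fun d => ∑ j : Fin (n + 2), ((j : ℕ) : ZMod (n + 2)) ^ d * v j
    with hA
  -- the equation from row 0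
  have H0 : A (n + 1) = 0 := by
    have h := congrFun hv ⟨0, by omega⟩
    simp only [Matrix.mulVec, dotProduct, Matrix.of_apply, Pi.zero_apply] at h
    simp only [Fin.val_mk, Nat.cast_zero, aontEntry_zero] at h
    exact h
  -- the equations from the other rows
  have H1 : ∀ x : ZMod (n + 2), x ≠ 0 →
      ∑ j : Fin (n + 2), (((j : ℕ) : ZMod (n + 2)) - x) ^ n * v j = 0 := by
    intro x hx
    have h := congrFun hv ⟨x.val, ZMod.val_lt x⟩
    simp only [Matrix.mulVec, dotProduct, Matrix.of_apply, Pi.zero_apply] at h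
    rw [show (((⟨x.val, ZMod.val_lt x⟩ : Fin (n + 2)) : ℕ) : ZMod (n + 2)) = x from
      ZMod.natCast_rightInverse x] at h
    simp only [aontEntry_ne n hx] at h
    exact h
  -- power sums over the units
  have hpsum : ∀ k : ℕ, (∑ u : (ZMod (n + 2))ˣ, ((u : ZMod (n + 2))) ^ k)
      = if (n + 1) ∣ k then -1 else 0 := by
    intro k
    have h := FiniteField.sum_pow_units (ZMod (n + 2)) k
    rw [ZMod.card] at h
    have e : n + 2 - 1 = n + 1 := rfl
    rw [e] at h
    simpa [Units.val_pow_eq_pow_val] using h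
  -- binomial expansion of the row equations
  have hexp : ∀ x : ZMod (n + 2), x ≠ 0 →
      ∑ m ∈ Finset.range (n + 1), (A m * ((n.choose m : ℕ) : ZMod (n + 2)) * (-1) ^ (n - m))
        * x ^ (n - m) = 0 := by
    intro x hx
    have h := H1 x hx
    have h2 : ∀ j : Fin (n + 2), (((j : ℕ) : ZMod (n + 2)) - x) ^ n * v j
        = ∑ m ∈ Finset.range (n + 1), (((j : ℕ) : ZMod (n + 2)) ^ m * v j)
            * (((n.choose m : ℕ) : ZMod (n + 2)) * (-1) ^ (n - m) * x ^ (n - m)) := by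
      intro j
      rw [sub_eq_add_neg, add_pow, Finset.sum_mul]
      refine Finset.sum_congr rfl fun m _ => ?_
      rw [neg_pow]
      ring
    rw [Finset.sum_congr rfl fun j _ => h2 j, Finset.sum_comm] at h
    refine Eq.trans ?_ h
    refine Finset.sum_congr rfl fun m _ => ?_
    rw [hA, Finset.sum_mul, Finset.sum_mul, Finset.sum_mul]
    refine Finset.sum_congr rfl fun j _ => ?_
    ring
  -- the moments all vanish
  have key : ∀ d, d ≤ n → A d = 0 := by
    intro d hd
    have h4 : ∑ u : (ZMod (n + 2))ˣ, (((u : ZMod (n + 2))) ^ (d + 1) *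
        ∑ m ∈ Finset.range (n + 1),
          (A m * ((n.choose m : ℕ) : ZMod (n + 2)) * (-1) ^ (n - m))
            * ((u : ZMod (n + 2))) ^ (n - m)) = 0 :=
      Finset.sum_eq_zero fun u _ => by
        rw [hexp (u : ZMod (n + 2)) (Units.ne_zero u), mul_zero]
    have h3 : ∑ m ∈ Finset.range (n + 1),
        (A m * ((n.choose m : ℕ) : ZMod (n + 2)) * (-1) ^ (n - m)) *
          (∑ u : (ZMod (n + 2))ˣ, ((u : ZMod (n + 2))) ^ (d + 1 + (n - m))) = 0 := by
      rw [← h4]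
      simp only [Finset.mul_sum]
      rw [Finset.sum_comm]
      refine Finset.sum_congr rfl fun m _ => Finset.sum_congr rfl fun u _ => ?_
      rw [pow_add]
      ring
    rw [Finset.sum_eq_single_of_mem d (Finset.mem_range.mpr (by omega))] at h3
    · rw [hpsum, if_pos (by rw [show d + 1 + (n - d) = n + 1 by omega])] at h3
      have hch : ((n.choose d : ℕ) : ZMod (n + 2)) ≠ 0 := by
        intro h0
        rw [ZMod.natCast_eq_zero_iff] at h0
        have h1 : n.choose d * d.factorial * (n - d).factorial = n.factorial :=
          Nat.choose_mul_factorial_mul_factorial hd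
        have h2 : (n + 2) ∣ n.factorial := h1 ▸ (h0.mul_right _).mul_right _
        have := (Nat.Prime.dvd_factorial hp).mp h2
        omega
      have hsg : ((-1 : ZMod (n + 2)) ^ (n - d)) ≠ 0 := pow_ne_zero _ (by
        simp only [ne_eq, neg_eq_zero]
        exact one_ne_zero)
      simpa [mul_eq_zero, hch, hsg] using h3
    · intro m hm hmd
      rw [hpsum, if_neg, mul_zero]
      rintro ⟨t, ht⟩
      have hm' : m < n + 1 := Finset.mem_range.mp hm
      have hlt : d + 1 + (n - m) < (n + 1) * 2 := by omega
      have hpos : 0 < d + 1 + (n - m) := by omega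
      rw [ht] at hlt hpos
      have ht1 : t = 1 := by
        have h5 : t < 2 := Nat.lt_of_mul_lt_mul_left hlt
        have h6 : t ≠ 0 := by rintro rfl; omega
        omega
      rw [ht1, mul_one] at ht
      exact hmd (by omega)
  -- conclude every coordinate of v vanishes
  have hz : ∀ j₀ : Fin (n + 2), v j₀ = 0 := by
    intro j₀
    have hind : ∑ j : Fin (n + 2),
        (1 - (((j : ℕ) : ZMod (n + 2)) - ((j₀ : ℕ) : ZMod (n + 2))) ^ (n + 1)) * v j
          = v j₀ := by
      rw [Finset.sum_eq_single_of_mem j₀ (Finset.mem_univ _)]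
      · rw [sub_self, zero_pow (by omega : n + 1 ≠ 0), sub_zero, one_mul]
      · intro j _ hj
        have hne : ((j : ℕ) : ZMod (n + 2)) - ((j₀ : ℕ) : ZMod (n + 2)) ≠ 0 := by
          refine sub_ne_zero.mpr fun h => hj ?_
          have h2 := congrArg ZMod.val h
          rwa [ZMod.val_natCast_of_lt j.isLt, ZMod.val_natCast_of_lt j₀.isLt,
            ← Fin.ext_iff] at h2
        rw [aont_pow_card_sub_one hp _ hne, sub_self, zero_mul]
    have step1 : ∀ j : Fin (n + 2),
        (1 - (((j : ℕ) : ZMod (n + 2)) - ((j₀ : ℕ) : ZMod (n + 2))) ^ (n + 1)) * v j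
          = ((j : ℕ) : ZMod (n + 2)) ^ 0 * v j
            - ∑ m ∈ Finset.range (n + 2), (((j : ℕ) : ZMod (n + 2)) ^ m * v j)
                * ((-(((j₀ : ℕ)) : ZMod (n + 2))) ^ (n + 1 - m)
                  * (((n + 1).choose m : ℕ) : ZMod (n + 2))) := by
      intro j
      rw [sub_eq_add_neg (((j : ℕ) : ZMod (n + 2))), add_pow]
      rw [show Finset.range (n + 1 + 1) = Finset.range (n + 2) from rfl]
      rw [sub_mul, Finset.sum_mul, pow_zero]
      congr 1
      refine Finset.sum_congr rfl fun m _ => by ring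
    have hexp2 : ∑ j : Fin (n + 2),
        (1 - (((j : ℕ) : ZMod (n + 2)) - ((j₀ : ℕ) : ZMod (n + 2))) ^ (n + 1)) * v j
        = A 0 - ∑ m ∈ Finset.range (n + 2),
            A m * ((-(((j₀ : ℕ)) : ZMod (n + 2))) ^ (n + 1 - m) * (((n + 1).choose m : ℕ)
              : ZMod (n + 2))) := by
      rw [Finset.sum_congr rfl fun j _ => step1 j]
      rw [Finset.sum_sub_distrib]
      congr 1
      · rw [Finset.sum_comm]
        refine Finset.sum_congr rfl fun m _ => ?_
        rw [← Finset.sum_mul]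
    have hAall : ∀ m ∈ Finset.range (n + 2), A m *
        ((-(((j₀ : ℕ)) : ZMod (n + 2))) ^ (n + 1 - m) * (((n + 1).choose m : ℕ)
          : ZMod (n + 2))) = 0 := by
      intro m hm
      have hm' : m < n + 2 := Finset.mem_range.mp hm
      rcases Nat.lt_or_ge m (n + 1) with h | h
      · rw [key m (by omega), zero_mul]
      · have : m = n + 1 := by omega
        rw [this, H0, zero_mul]
    rw [hexp2, Finset.sum_eq_zero hAall, key 0 (by omega), sub_zero] at hind
    exact hind.symm
  exact hvne (funext hz)

/-- For every prime p there exists a linear (2,p,p)-AONT: an invertible p×p matrix over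
F_p all of whose 2×2 submatrices are invertible. -/
theorem exists_linear_2pp_AONT (p : ℕ) (hp : p.Prime) :
    ∃ M : Matrix (Fin p) (Fin p) (ZMod p),
      M.det ≠ 0 ∧
      ∀ i j k l : Fin p, i ≠ j → k ≠ l →
        Matrix.det !![M i k, M i l; M j k, M j l] ≠ 0 := by
  haveI : Fact p.Prime := ⟨hp⟩
  by_cases hp2 : p = 2
  · subst hp2
    refine ⟨!![0, 1; 1, 1], ?_, ?_⟩
    · rw [Matrix.det_fin_two]
      norm_num
    · intro i j k l hij hkl
      rw [Matrix.det_fin_two_of]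
      fin_cases i <;> fin_cases j <;> fin_cases k <;> fin_cases l <;> simp_all
  · obtain ⟨n, rfl⟩ : ∃ n, p = n + 2 := ⟨p - 2, by have := hp.two_le; omega⟩
    have hn : 1 ≤ n := by omega
    refine ⟨Matrix.of fun i j =>
      aontEntry n ((i : ℕ) : ZMod (n + 2)) ((j : ℕ) : ZMod (n + 2)),
      aont_det_ne hn hp, ?_⟩
    intro i j k l hij hkl
    rw [Matrix.det_fin_two_of]
    have hcast : ∀ a b : Fin (n + 2), a ≠ b →
        ((a : ℕ) : ZMod (n + 2)) ≠ ((b : ℕ) : ZMod (n + 2)) := by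
      intro a b hab h
      apply hab
      have h2 := congrArg ZMod.val h
      rwa [ZMod.val_natCast_of_lt a.isLt, ZMod.val_natCast_of_lt b.isLt,
        ← Fin.ext_iff] at h2
    exact aont_minor_ne hn hp _ _ _ _ (hcast i j hij) (hcast k l hkl)
end

section
/- Let q be a prime power, let α be a primitive element (multiplicative generator) of the finite field F_q, and let P be the (q−1)×(q−1) matrix over F_q, with rows and columns indexed by 0,1,…,q−2, defined by P(s,s) = 0 for all s and P(s,t) = α^s/(α^s − α^t) for all s ≠ t. Then every 2×2 submatrix of P, obtained by selecting any two distinct rows and any two distinct columns, is invertible. -/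
/-- Every 2×2 submatrix of the (q−1)×(q−1) matrix P of Construction 2.13
(P(s,s)=0, P(s,t)=α^s/(α^s−α^t) for s ≠ t, α a primitive element of F_q) is invertible. -/
theorem construction_P_two_by_two_submatrices_invertible
    (q : ℕ) (hq : IsPrimePow q) (F : Type*) [Field F] [Fintype F]
    (hF : Fintype.card F = q)
    (α : F) (hα : ∀ x : F, x ≠ 0 → ∃ n : ℕ, x = α ^ n)
    (P : Matrix (Fin (q - 1)) (Fin (q - 1)) F)
    (hdiag : ∀ s, P s s = 0)
    (hentry : ∀ s t : Fin (q - 1), s ≠ t →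
      P s t = α ^ (s : ℕ) / (α ^ (s : ℕ) - α ^ (t : ℕ))) :
    ∀ i j k l : Fin (q - 1), i ≠ j → k ≠ l →
      Matrix.det !![P i k, P i l; P j k, P j l] ≠ 0 := by
  classical
  intro i j k l hij hkl
  -- q - 1 ≥ 2
  have hq2 : 2 ≤ q - 1 := by
    by_contra h
    push_neg at h
    interval_cases h' : (q - 1)
    · exact absurd i.2 (by omega)
    · exact hij (Fin.ext (by omega))
  -- α ≠ 0
  have hα0 : α ≠ 0 := by
    intro h0
    have hx : ∃ x : F, x ≠ 0 ∧ x ≠ 1 := by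
      by_contra h
      push_neg at h
      have hsub : (Finset.univ : Finset F) ⊆ {0, 1} := by
        intro x _
        rcases eq_or_ne x 0 with h0' | h0'
        · simp [h0']
        · simp [h x h0']
      have := Finset.card_le_card hsub
      rw [Finset.card_univ, hF] at this
      have h2 : ({0, 1} : Finset F).card ≤ 2 :=
        le_trans (Finset.card_insert_le _ _) (by simp)
      omega
    obtain ⟨x, hx0, hx1⟩ := hx
    obtain ⟨n, hn⟩ := hα x hx0
    rcases Nat.eq_zero_or_pos n with hn0 | hn0
    · subst hn0; simp only [pow_zero] at hn; exact hx1 hn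
    · rw [h0, zero_pow hn0.ne'] at hn
      exact hx0 hn
  set u : Fˣ := Units.mk0 α hα0 with hu
  have hup : ∀ n : ℕ, ((u ^ n : Fˣ) : F) = α ^ n := by
    intro n; simp [hu]
  have horder : orderOf u = q - 1 := by
    have hmem : ∀ v : Fˣ, v ∈ Subgroup.zpowers u := by
      intro v
      obtain ⟨n, hn⟩ := hα v v.ne_zero
      have : v = u ^ n := Units.ext (by rw [hup, ← hn])
      rw [this]
      exact ⟨(n : ℤ), by simp⟩
    have := orderOf_eq_card_of_forall_mem_zpowers hmem
    rwa [Nat.card_units, Nat.card_eq_fintype_card, hF] at this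
  have habs : ∀ s t : Fin (q - 1), s ≠ t → α ^ (s : ℕ) ≠ α ^ (t : ℕ) := by
    intro s t hst h
    have hu' : u ^ (s : ℕ) = u ^ (t : ℕ) := Units.ext (by rw [hup, hup, h])
    rw [pow_eq_pow_iff_modEq, horder] at hu'
    exact hst (Fin.ext ((Nat.ModEq.eq_of_lt_of_lt hu' s.2 t.2)))
  have hsub : ∀ s t : Fin (q - 1), s ≠ t → α ^ (s : ℕ) - α ^ (t : ℕ) ≠ 0 :=
    fun s t hst => sub_ne_zero.mpr (habs s t hst)
  have hpow : ∀ n : ℕ, α ^ n ≠ 0 := fun n => pow_ne_zero n hα0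
  have hPne : ∀ s t : Fin (q - 1), s ≠ t → P s t ≠ 0 := by
    intro s t hst
    rw [hentry s t hst]
    exact div_ne_zero (hpow s) (hsub s t hst)
  rw [Matrix.det_fin_two_of]
  set a := α ^ (i : ℕ)
  set b := α ^ (j : ℕ)
  set c := α ^ (k : ℕ)
  set d := α ^ (l : ℕ)
  rcases eq_or_ne i k with rfl | hik
  · -- P i k = 0
    rw [hdiag i]
    have hil : i ≠ l := hkl
    have hjk : j ≠ i := hij.symm
    simp only [zero_mul, zero_sub, neg_ne_zero]
    exact mul_ne_zero (hPne i l hil) (hPne j i hjk)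
  rcases eq_or_ne i l with rfl | hil
  · rw [hdiag i]
    simp only [zero_mul, sub_zero]
    exact mul_ne_zero (hPne i k hik) (hPne j i hij.symm)
  rcases eq_or_ne j k with rfl | hjk
  · rw [hdiag j]
    simp only [mul_zero, sub_zero, zero_mul]
    exact mul_ne_zero (hPne i j hij) (hPne j l hkl)
  rcases eq_or_ne j l with rfl | hjl
  · rw [hdiag j]
    simp only [mul_zero, zero_sub, neg_ne_zero]
    exact mul_ne_zero (hPne i j hij) (hPne j k hjk)
  · -- all distinct
    rw [hentry i k hik, hentry i l hil, hentry j k hjk, hentry j l hjl]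
    have hab : a - b ≠ 0 := hsub i j hij
    have hcd : d - c ≠ 0 := hsub l k hkl.symm
    have hac : a - c ≠ 0 := hsub i k hik
    have had : a - d ≠ 0 := hsub i l hil
    have hbc : b - c ≠ 0 := hsub j k hjk
    have hbd : b - d ≠ 0 := hsub j l hjl
    have key : a / (a - c) * (b / (b - d)) - a / (a - d) * (b / (b - c))
        = a * b * (d - c) * (a - b) / ((a - c) * (b - d) * ((a - d) * (b - c))) := by
      field_simp
      ring
    rw [key]
    exact div_ne_zero (mul_ne_zero (mul_ne_zero (mul_ne_zero (hpow i) (hpow j)) hcd) hab)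
      (mul_ne_zero (mul_ne_zero hac hbd) (mul_ne_zero had hbc))
end

section
/- For every prime power q = p^r there exists an invertible Φ(q)×Φ(q) matrix M over the finite field F_q, where Φ(q) = p^r − p^{r−1} is the Euler totient of q, such that every 2×2 submatrix of M (obtained by selecting any two rows and any two columns) is invertible; that is, a linear (2,Φ(q),q)-AONT exists for all prime powers q. -/
/-!
Take `s = φ(q)` distinct elements `x₁, …, x_s` of `F_q`, put `n = s - 1` and
`M i j = (x_i + x_j) ^ n`. By the binomial theorem `M = V · diag (n choose k) · Wᵀ` with `V, W`
Vandermonde matrices (one with reversed columns), so `M` is invertible once no `n choose k` is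
divisible by `p`. By Lucas' theorem this holds because `n + 1 = (p - 1) p^(r-1)`: every base-`p`
digit of `n` except the leading one is `p - 1`.

The `2 × 2` minor on rows `i, j` and columns `k, l` is `A ^ n - B ^ n` with
`A = (x_i + x_k)(x_j + x_l)` and `B = (x_i + x_l)(x_j + x_k)`, so `A - B = (x_i - x_j)(x_l - x_k)`
is nonzero. Since `n = (q - 1) - p^(r-1)` is coprime to `q - 1`, the map `x ↦ x ^ n` is injective
on `F_q`, so the minor does not vanish.
-/

open Matrix

theorem Nat.Prime.not_dvd_choose_of_succ_eq_mul_pow {p b t n k : ℕ} (hp : p.Prime) (hb : b ≤ p)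
    (hn : n + 1 = b * p ^ t) (hk : k ≤ n) : ¬p ∣ n.choose k := by
  have := Fact.mk hp
  induction t generalizing n k with
  | zero => exact hp.coprime_iff_not_dvd.mp (hp.coprime_choose_of_lt (by simp at hn; omega) hk)
  | succ t ih =>
    have hb0 : 0 < b := Nat.pos_of_ne_zero fun h => by simp [h] at hn
    obtain ⟨c, hc⟩ := Nat.exists_eq_add_one.mpr (Nat.mul_pos hb0 (pow_pos hp.pos t))
    have hp1 : p - 1 < p := Nat.sub_lt hp.pos one_pos
    have hdigits : n = p * c + (p - 1) := by
      rw [pow_succ', mul_left_comm, hc, mul_add_one] at hn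
      omega
    have hmod : n % p = p - 1 := by rw [hdigits, Nat.mul_add_mod, Nat.mod_eq_of_lt hp1]
    have hdiv : n / p = c := by
      rw [hdigits, Nat.mul_add_div hp.pos, Nat.div_eq_of_lt hp1, add_zero]
    have hlucas := Choose.choose_modEq_choose_mod_mul_choose_div_nat (n := n) (k := k) (p := p)
    rw [hmod, hdiv] at hlucas
    rw [hlucas.dvd_iff dvd_rfl, hp.dvd_mul, not_or]
    refine ⟨hp.coprime_iff_not_dvd.mp ?_, ih hc.symm (hdiv ▸ Nat.div_le_div_right hk)⟩
    exact hp.coprime_choose_of_lt hp1 (Nat.le_sub_one_of_lt (Nat.mod_lt k hp.pos))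

theorem Nat.coprime_pow_sub_pow_pred_sub_one {p r : ℕ} (hp : p.Prime) (hr : 0 < r) :
    (p ^ r - p ^ (r - 1) - 1).Coprime (p ^ r - 1) := by
  have hle : p ^ (r - 1) ≤ p ^ r - 1 := by
    have := Nat.pow_lt_pow_right hp.one_lt (Nat.sub_lt hr one_pos)
    omega
  rw [Nat.sub_right_comm, Nat.coprime_self_sub_left hle]
  refine Nat.Coprime.pow_left _ (Nat.Coprime.symm ?_)
  exact ((Nat.coprime_self_sub_left (Nat.one_le_pow _ _ hp.pos)).mpr (Nat.coprime_one_left _))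
    |>.coprime_dvd_right (dvd_pow_self p hr.ne')

theorem FiniteField.pow_injective_of_coprime {F : Type*} [Field F] [Finite F] {n : ℕ}
    (hn : n ≠ 0) (hcop : n.Coprime (Nat.card F - 1)) : Function.Injective (· ^ n : F → F) := by
  intro a b hab
  simp only at hab
  obtain rfl | ha := eq_or_ne a 0
  · exact ((pow_eq_zero_iff hn).mp (by rw [← hab, zero_pow hn])).symm
  obtain rfl | hb := eq_or_ne b 0
  · exact (pow_eq_zero_iff hn).mp (by rw [hab, zero_pow hn])
  have hunits : (Nat.card Fˣ).Coprime n := by rw [Nat.card_units]; exact hcop.symm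
  have := hunits.pow_left_bijective.injective (a₁ := Units.mk0 a ha) (a₂ := Units.mk0 b hb)
    (Units.ext (by simpa using hab))
  simpa using congrArg Units.val this

theorem Matrix.of_add_pow_eq {R : Type*} [CommRing R] (n : ℕ) (x y : Fin (n + 1) → R) :
    of (fun i j => (x i + y j) ^ n) =
      vandermonde x * diagonal (fun k : Fin (n + 1) => (n.choose k : R)) *
        ((vandermonde y).submatrix id Fin.revPerm)ᵀ := by
  ext i j
  rw [mul_apply]
  simp only [of_apply, mul_diagonal, transpose_apply, submatrix_apply, vandermonde_apply, id_eq,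
    Fin.revPerm_apply, Fin.val_rev]
  rw [add_pow, Finset.sum_range (fun k => x i ^ k * y j ^ (n - k) * (n.choose k : R))]
  refine Finset.sum_congr rfl fun k _ => ?_
  rw [show n + 1 - (k + 1) = n - k by omega]
  ring

theorem Matrix.det_of_add_pow_ne_zero {R : Type*} [Field R] (n : ℕ) {x y : Fin (n + 1) → R}
    (hx : Function.Injective x) (hy : Function.Injective y)
    (hchoose : ∀ k ≤ n, (n.choose k : R) ≠ 0) :
    (of fun i j => (x i + y j) ^ n).det ≠ 0 := by
  rw [of_add_pow_eq, det_mul, det_mul, det_transpose, det_permute', det_diagonal]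
  refine mul_ne_zero (mul_ne_zero ?_ ?_) (mul_ne_zero ?_ ?_)
  · exact det_vandermonde_ne_zero_iff.mpr hx
  · exact Finset.prod_ne_zero_iff.mpr fun k _ => hchoose k (Nat.lt_succ_iff.mp k.isLt)
  · exact ((Equiv.Perm.sign _).isUnit.map (Int.castRingHom R)).ne_zero
  · exact det_vandermonde_ne_zero_iff.mpr hy

theorem Matrix.det_fin_two_add_pow_ne_zero {R : Type*} [CommRing R] [IsDomain R] {n : ℕ}
    (hn : Function.Injective (· ^ n : R → R)) {a b c d : R} (hab : a ≠ b) (hcd : c ≠ d) :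
    !![(a + c) ^ n, (a + d) ^ n; (b + c) ^ n, (b + d) ^ n].det ≠ 0 := by
  rw [det_fin_two_of, sub_ne_zero, ← mul_pow, ← mul_pow]
  refine hn.ne ?_
  rw [Ne, ← sub_eq_zero, show (a + c) * (b + d) - (a + d) * (b + c) = (a - b) * (d - c) by ring]
  exact mul_ne_zero (sub_ne_zero.mpr hab) (sub_ne_zero.mpr hcd.symm)

/-- For every prime power q = p^r there is a linear (2,Φ(q),q)-AONT: an invertible
Φ(q)×Φ(q) matrix over F_q, Φ(q) = p^r − p^{r−1}, all of whose 2×2 submatrices are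
invertible. -/
theorem exists_linear_2_totient_q_AONT
    (p r : ℕ) (hp : p.Prime) (hr : 0 < r)
    (F : Type*) [Field F] [Fintype F] (hF : Fintype.card F = p ^ r) :
    ∃ M : Matrix (Fin (p ^ r - p ^ (r - 1))) (Fin (p ^ r - p ^ (r - 1))) F,
      M.det ≠ 0 ∧
      ∀ i j k l : Fin (p ^ r - p ^ (r - 1)), i ≠ j → k ≠ l →
        Matrix.det !![M i k, M i l; M j k, M j l] ≠ 0 := by
  have := Fact.mk hp
  have : CharP F p := charP_of_card_eq_prime_pow hF
  have htotient : p ^ r - p ^ (r - 1) = (p - 1) * p ^ (r - 1) := by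
    rw [Nat.sub_one_mul, ← pow_succ', Nat.sub_add_cancel hr]
  obtain ⟨n, hn⟩ : ∃ n, p ^ r - p ^ (r - 1) = n + 1 := Nat.exists_eq_add_one.mpr <|
    htotient ▸ Nat.mul_pos (Nat.sub_pos_of_lt hp.one_lt) (pow_pos hp.pos _)
  have hchoose : ∀ k ≤ n, (n.choose k : F) ≠ 0 := fun k hk => by
    rw [Ne, CharP.cast_eq_zero_iff F p]
    exact hp.not_dvd_choose_of_succ_eq_mul_pow (Nat.sub_le p 1) (hn ▸ htotient) hk
  have hpow : n ≠ 0 → Function.Injective (· ^ n : F → F) := fun hn0 =>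
    FiniteField.pow_injective_of_coprime hn0 <| by
      rw [Nat.card_eq_fintype_card, hF, show n = p ^ r - p ^ (r - 1) - 1 by omega]
      exact Nat.coprime_pow_sub_pow_pred_sub_one hp hr
  obtain ⟨e⟩ : Nonempty (Fin (n + 1) ↪ F) :=
    Function.Embedding.nonempty_of_card_le (by rw [Fintype.card_fin, hF]; omega)
  rw [hn]
  refine ⟨of fun i j => (e i + e j) ^ n, det_of_add_pow_ne_zero n e.injective e.injective hchoose,
    fun i j k l hij hkl => det_fin_two_add_pow_ne_zero (hpow ?_) (e.injective.ne hij)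
      (e.injective.ne hkl)⟩
  rintro rfl
  exact hij (Subsingleton.elim (α := Fin 1) i j)
end

section
/- Let p be a prime and let α be a primitive element of F_p. Define the p×p matrix Q over F_p, with rows and columns indexed by 0,1,…,p−1, by: Q(s,s) = 0 for all s; Q(s,0) = Q(0,s) = 1 for all s ≠ 0; and Q(s,t) = α^t/(α^t − α^s) for all distinct s,t ∈ {1,…,p−1}. Then: (i) Q is invertible; (ii) every 2×2 submatrix of Q is invertible; (iii) Q(s,t) + Q(t,s) = 1 for all distinct s,t ∈ {1,…,p−1}; and (iv) the lower-right (p−1)×(p−1) submatrix of Q is cyclic, i.e., Q(s,t) depends only on the residue of t−s modulo p−1 for s,t ∈ {1,…,p−1}. In particular, a cyclic 1-skew-symmetric linear (2,p,p)-AONT exists for every prime p. -/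
open Finset

/-- Sum of inverses over `ZMod p` is 0. -/
lemma aux_sum_inv {p : ℕ} [Fact p.Prime] (hp : 3 ≤ p) :
    ∑ δ : ZMod p, δ⁻¹ = 0 := by
  have h1 : ∑ δ : ZMod p, δ = ∑ δ : ZMod p, δ⁻¹ :=
    Fintype.sum_bijective (fun x : ZMod p => x⁻¹)
      (Function.Involutive.bijective (fun x => inv_inv x))
      (fun δ => δ) (fun δ => δ⁻¹) (fun x => (inv_inv x).symm)
  rw [← h1]
  have := FiniteField.sum_pow_lt_card_sub_one (ZMod p) 1
    (by rw [ZMod.card]; omega)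
  simpa using this

/-- Sum of `m`-th powers over `ZMod p` is 0 for `m < p - 1`. -/
lemma aux_sum_pow {p : ℕ} [Fact p.Prime] {m : ℕ} (hm : m < p - 1) :
    ∑ γ : ZMod p, γ ^ m = 0 :=
  FiniteField.sum_pow_lt_card_sub_one (ZMod p) m (by rw [ZMod.card]; omega)

/-- Key identity: `∑ γ, γ^m (1-γ)⁻¹ = m` for `1 ≤ m ≤ p-2`. -/
lemma aux_key_sum {p : ℕ} [Fact p.Prime] {m : ℕ} (h1 : 1 ≤ m) (h2 : m ≤ p - 2) :
    ∑ γ : ZMod p, γ ^ m * (1 - γ)⁻¹ = (m : ZMod p) := by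
  have hp : p.Prime := Fact.out
  have hp3 : 3 ≤ p := by
    have := hp.two_le; rcases Nat.lt_or_ge p 3 with h | h
    · interval_cases p <;> omega
    · exact h
  have hsplit := Finset.add_sum_erase Finset.univ
    (fun γ : ZMod p => γ ^ m * (1 - γ)⁻¹) (Finset.mem_univ (1 : ZMod p))
  have hrw : ∀ γ ∈ Finset.univ.erase (1 : ZMod p),
      γ ^ m * (1 - γ)⁻¹ = (1 - γ)⁻¹ - ∑ k ∈ Finset.range m, γ ^ k := by
    intro γ hγ
    have hγ1 : γ ≠ 1 := (Finset.mem_erase.mp hγ).1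
    have hne : (1 : ZMod p) - γ ≠ 0 := sub_ne_zero.mpr (Ne.symm hγ1)
    field_simp
    linear_combination -geom_sum_mul γ m
  rw [Finset.sum_congr rfl hrw, Finset.sum_sub_distrib] at hsplit
  have hA : ∑ γ ∈ Finset.univ.erase (1 : ZMod p), (1 - γ)⁻¹ = 0 := by
    have h0 : ∑ γ : ZMod p, (1 - γ)⁻¹ = ∑ δ : ZMod p, δ⁻¹ :=
      Fintype.sum_bijective (fun x : ZMod p => 1 - x)
        (Function.Involutive.bijective (fun x => by ring))
        (fun γ => (1 - γ)⁻¹) (fun δ => δ⁻¹) (fun x => rfl)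
    have hsp := Finset.add_sum_erase Finset.univ
      (fun γ : ZMod p => (1 - γ)⁻¹) (Finset.mem_univ (1 : ZMod p))
    rw [h0, aux_sum_inv hp3] at hsp
    simpa using hsp
  have hB : ∑ γ ∈ Finset.univ.erase (1 : ZMod p), ∑ k ∈ Finset.range m, γ ^ k
      = -(m : ZMod p) := by
    rw [Finset.sum_comm]
    have hplc : ∀ k ∈ Finset.range m,
        ∑ γ ∈ Finset.univ.erase (1 : ZMod p), γ ^ k = -1 := by
      intro k hk
      have hk' : k < p - 1 := by
        have := Finset.mem_range.mp hk; omega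
      have hsp := Finset.add_sum_erase Finset.univ
        (fun γ : ZMod p => γ ^ k) (Finset.mem_univ (1 : ZMod p))
      simp only [one_pow] at hsp
      rw [aux_sum_pow hk'] at hsp
      linear_combination hsp
    rw [Finset.sum_congr rfl hplc]
    simp
  rw [hA, hB] at hsplit
  simpa using hsplit.symm

/-- Values in `[1,n]` that are equal mod `n` are equal. -/
lemma aux_mod_helper {n a b : ℕ} (ha : 1 ≤ a) (ha' : a ≤ n) (hb : 1 ≤ b)
    (hb' : b ≤ n) (h : a % n = b % n) : a = b := by
  rcases eq_or_lt_of_le ha' with rfl | hlt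
  · rcases eq_or_lt_of_le hb' with rfl | hbl
    · rfl
    · rw [Nat.mod_self, Nat.mod_eq_of_lt hbl] at h; omega
  · rcases eq_or_lt_of_le hb' with rfl | hbl
    · rw [Nat.mod_self, Nat.mod_eq_of_lt hlt] at h; omega
    · rw [Nat.mod_eq_of_lt hlt, Nat.mod_eq_of_lt hbl] at h; exact h

/-- A multiple of `n` that is smaller than `n` in absolute value is zero. -/
lemma aux_int_helper {n x : ℤ} (hd : n ∣ x) (hb : |x| < n) : x = 0 := by
  have hn : 0 < n := lt_of_le_of_lt (abs_nonneg _) hb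
  rcases hd with ⟨c, rfl⟩
  rcases lt_trichotomy c 0 with hc | rfl | hc
  · nlinarith [neg_abs_le (n * c)]
  · ring
  · nlinarith [le_abs_self (n * c)]

/-- Reindexing sums over nonzero indices of `Fin p` to sums over nonzero
elements of `ZMod p` via `s ↦ α ^ s`. -/
lemma aux_reindex {p : ℕ} [NeZero p] {α : ZMod p} (f : ZMod p → ZMod p)
    (hmem : ∀ s : Fin p, s ≠ 0 → α ^ (s : ℕ) ≠ 0)
    (hinj : ∀ s t : Fin p, s ≠ 0 → t ≠ 0 → α ^ (s : ℕ) = α ^ (t : ℕ) → s = t)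
    (hsurj : ∀ γ : ZMod p, γ ≠ 0 → ∃ s : Fin p, s ≠ 0 ∧ α ^ (s : ℕ) = γ) :
    ∑ s ∈ Finset.univ.erase (0 : Fin p), f (α ^ (s : ℕ))
      = ∑ γ ∈ Finset.univ.erase (0 : ZMod p), f γ := by
  apply Finset.sum_bij
    (fun (s : Fin p) (_ : s ∈ Finset.univ.erase (0 : Fin p)) => α ^ (s : ℕ))
  · intro a ha
    exact Finset.mem_erase.mpr ⟨hmem a (Finset.mem_erase.mp ha).1, Finset.mem_univ _⟩
  · intro a ha b hb hab
    exact hinj a b (Finset.mem_erase.mp ha).1 (Finset.mem_erase.mp hb).1 hab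
  · intro γ hγ
    obtain ⟨s, hs0, hs⟩ := hsurj γ (Finset.mem_erase.mp hγ).1
    exact ⟨s, Finset.mem_erase.mpr ⟨hs0, Finset.mem_univ _⟩, hs⟩
  · intro a _
    rfl

set_option maxHeartbeats 1000000 in
/-- The matrix Q of Construction 2.21 (Q(s,s)=0, first row and column equal to 1 off the
corner, Q(s,t)=α^t/(α^t−α^s) otherwise) is an invertible matrix all of whose 2×2
submatrices are invertible, its lower-right (p−1)×(p−1) part is 1-skew-symmetric and
cyclic (circulant). In particular a cyclic skew-symmetric linear (2,p,p)-AONT exists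
for every prime p. -/
theorem construction_Q_cyclic_skew_symmetric_AONT
    (p : ℕ) [Fact p.Prime]
    (α : ZMod p) (hα : ∀ x : ZMod p, x ≠ 0 → ∃ n : ℕ, x = α ^ n)
    (Q : Matrix (Fin p) (Fin p) (ZMod p))
    (hdiag : ∀ s : Fin p, Q s s = 0)
    (hfirst : ∀ s : Fin p, s ≠ 0 → Q s 0 = 1 ∧ Q 0 s = 1)
    (hentry : ∀ s t : Fin p, s ≠ 0 → t ≠ 0 → s ≠ t →
      Q s t = α ^ (t : ℕ) / (α ^ (t : ℕ) - α ^ (s : ℕ))) :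
    Q.det ≠ 0 ∧
    (∀ i j k l : Fin p, i ≠ j → k ≠ l →
      Matrix.det !![Q i k, Q i l; Q j k, Q j l] ≠ 0) ∧
    (∀ s t : Fin p, s ≠ 0 → t ≠ 0 → s ≠ t → Q s t + Q t s = 1) ∧
    (∀ s t s' t' : Fin p, s ≠ 0 → t ≠ 0 → s' ≠ 0 → t' ≠ 0 →
      Int.ModEq (p - 1) ((t : ℤ) - (s : ℤ)) ((t' : ℤ) - (s' : ℤ)) →
      Q s t = Q s' t') := by
  have hp : p.Prime := Fact.out
  rcases eq_or_ne p 2 with rfl | hp2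
  · -- case p = 2
    have h10 : (1 : Fin 2) ≠ 0 := by decide
    have hQ00 : Q 0 0 = 0 := hdiag 0
    have hQ11 : Q 1 1 = 0 := hdiag 1
    have hQ01 : Q 0 1 = 1 := (hfirst 1 h10).2
    have hQ10 : Q 1 0 = 1 := (hfirst 1 h10).1
    have h01 : ∀ a : Fin 2, a = 0 ∨ a = 1 := by decide
    refine ⟨?_, ?_, ?_, ?_⟩
    · rw [Matrix.det_fin_two, hQ00, hQ11, hQ01, hQ10]
      intro h
      refine absurd ?_ (one_ne_zero (α := ZMod 2))
      linear_combination -h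
    · intro i j k l hij hkl
      rw [Matrix.det_fin_two_of]
      rcases h01 i with rfl | rfl <;> rcases h01 j with rfl | rfl <;>
        rcases h01 k with rfl | rfl <;> rcases h01 l with rfl | rfl <;>
        simp only [hQ00, hQ01, hQ10, hQ11] <;>
        first
          | exact absurd rfl hij
          | exact absurd rfl hkl
          | (intro h
             refine absurd ?_ (one_ne_zero (α := ZMod 2))
             first
               | linear_combination h
               | linear_combination -h)
    · intro s t hs ht hst
      rcases h01 s with rfl | rfl <;> rcases h01 t with rfl | rfl <;> simp_all
    · intro s t s' t' hs ht hs' ht' _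
      rcases h01 s with rfl | rfl <;> rcases h01 t with rfl | rfl <;>
        rcases h01 s' with rfl | rfl <;> rcases h01 t' with rfl | rfl <;> simp_all
  · -- case p ≥ 3
    have hp3 : 3 ≤ p := by have := hp.two_le; omega
    have hα0 : α ≠ 0 := by
      intro h
      obtain ⟨n, hn⟩ := hα (-1) (neg_ne_zero.mpr one_ne_zero)
      rw [h] at hn
      cases n with
      | zero =>
        rw [pow_zero] at hn
        have h2 : ((2 : ℕ) : ZMod p) = 0 := by push_cast; linear_combination -hn
        have hd := (CharP.cast_eq_zero_iff (ZMod p) p 2).mp h2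
        have := Nat.le_of_dvd (by norm_num) hd
        omega
      | succ k =>
        rw [zero_pow (Nat.succ_ne_zero k)] at hn
        exact (neg_ne_zero.mpr one_ne_zero) hn
    set u : (ZMod p)ˣ := Units.mk0 α hα0 with hu
    have huval : (u : ZMod p) = α := rfl
    have hord : orderOf u = p - 1 := by
      have h1 : ∀ x : (ZMod p)ˣ, x ∈ Subgroup.zpowers u := by
        intro x
        obtain ⟨n, hn⟩ := hα (x : ZMod p) (Units.ne_zero x)
        refine Subgroup.mem_zpowers_iff.mpr ⟨(n : ℤ), ?_⟩
        rw [zpow_natCast]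
        exact Units.ext (by rw [Units.val_pow_eq_pow_val, huval, hn])
      rw [orderOf_eq_card_of_forall_mem_zpowers h1, Nat.card_eq_fintype_card,
        ZMod.card_units]
    have hpow : ∀ a b : ℕ, α ^ a = α ^ b ↔ a ≡ b [MOD p - 1] := by
      intro a b
      have hiff : α ^ a = α ^ b ↔ u ^ a = u ^ b := by
        constructor
        · intro h
          exact Units.ext (by rw [Units.val_pow_eq_pow_val, Units.val_pow_eq_pow_val,
              huval, h])
        · intro h
          have := congrArg (Units.val) h
          rwa [Units.val_pow_eq_pow_val, Units.val_pow_eq_pow_val, huval] at this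
      rw [hiff, pow_eq_pow_iff_modEq, hord]
    have hval : ∀ s : Fin p, s ≠ 0 → 1 ≤ (s : ℕ) ∧ (s : ℕ) ≤ p - 1 := by
      intro s hs
      have h1 : (s : ℕ) < p := s.isLt
      have h2 : (s : ℕ) ≠ 0 := by
        intro h; exact hs (Fin.ext (by simp [h]))
      omega
    have hdist : ∀ a b : Fin p, a ≠ 0 → b ≠ 0 → a ≠ b →
        α ^ (a : ℕ) ≠ α ^ (b : ℕ) := by
      intro a b ha hb hab h
      have hm := (hpow _ _).mp h
      obtain ⟨ha1, ha2⟩ := hval a ha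
      obtain ⟨hb1, hb2⟩ := hval b hb
      exact hab (Fin.ext (aux_mod_helper ha1 ha2 hb1 hb2 hm))
    have hmem : ∀ s : Fin p, s ≠ 0 → α ^ (s : ℕ) ≠ 0 := fun s _ => pow_ne_zero _ hα0
    have hinj : ∀ s t : Fin p, s ≠ 0 → t ≠ 0 → α ^ (s : ℕ) = α ^ (t : ℕ) → s = t := by
      intro a b ha hb h
      by_contra hne
      exact hdist a b ha hb hne h
    have hsurj : ∀ γ : ZMod p, γ ≠ 0 → ∃ s : Fin p, s ≠ 0 ∧ α ^ (s : ℕ) = γ := by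
      intro γ hγ
      obtain ⟨n, hn⟩ := hα γ hγ
      by_cases h0 : n % (p - 1) = 0
      · refine ⟨⟨p - 1, by omega⟩, ?_, ?_⟩
        · simp only [ne_eq, Fin.ext_iff, Fin.val_zero]; omega
        · show α ^ (p - 1) = γ
          rw [hn]
          exact (hpow _ _).mpr (by unfold Nat.ModEq; rw [Nat.mod_self, h0])
      · have hlt : n % (p - 1) < p - 1 := Nat.mod_lt n (by omega)
        refine ⟨⟨n % (p - 1), by omega⟩, ?_, ?_⟩
        · simp only [ne_eq, Fin.ext_iff, Fin.val_zero]; omega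
        · show α ^ (n % (p - 1)) = γ
          rw [hn]
          exact (hpow _ _).mpr (Nat.mod_modEq n (p - 1))
    have hQne : ∀ a b : Fin p, a ≠ b → Q a b ≠ 0 := by
      intro a b hab
      by_cases ha : a = 0
      · subst ha
        rw [(hfirst b (Ne.symm hab)).2]
        exact one_ne_zero
      · by_cases hb : b = 0
        · subst hb
          rw [(hfirst a ha).1]
          exact one_ne_zero
        · rw [hentry a b ha hb hab]
          exact div_ne_zero (pow_ne_zero _ hα0)
            (sub_ne_zero.mpr (hdist b a hb ha (Ne.symm hab)))
    refine ⟨?_, ?_, ?_, ?_⟩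
    · -- (i) invertibility
      intro hdet
      obtain ⟨x, hx0, hx⟩ := Matrix.exists_mulVec_eq_zero_iff.mpr hdet
      apply hx0
      have hker : ∀ s : Fin p, ∑ t : Fin p, Q s t * x t = 0 := by
        intro s
        have := congrFun hx s
        simpa [Matrix.mulVec, dotProduct] using this
      -- column sums of Q over nonzero rows are -1
      have hKIc : ∀ t : Fin p, ∑ s ∈ Finset.univ.erase (0 : Fin p), Q s t = -1 := by
        intro t
        by_cases ht : t = 0
        · subst ht
          have hone : ∀ s ∈ Finset.univ.erase (0 : Fin p), Q s 0 = 1 :=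
            fun s hs => (hfirst s (Finset.mem_erase.mp hs).1).1
          rw [Finset.sum_congr rfl hone, Finset.sum_const,
            Finset.card_erase_of_mem (Finset.mem_univ _), Finset.card_univ,
            Fintype.card_fin, nsmul_eq_mul, mul_one,
            Nat.cast_sub (by omega : 1 ≤ p), ZMod.natCast_self, Nat.cast_one]
          ring
        · have htne : α ^ (t : ℕ) ≠ 0 := pow_ne_zero _ hα0
          have hstep : ∀ s ∈ Finset.univ.erase (0 : Fin p),
              Q s t = (fun γ : ZMod p => α ^ (t : ℕ) * (α ^ (t : ℕ) - γ)⁻¹)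
                (α ^ (s : ℕ)) := by
            intro s hs
            have hs0 : s ≠ 0 := (Finset.mem_erase.mp hs).1
            by_cases hst : s = t
            · subst hst
              rw [hdiag]
              simp
            · rw [hentry s t hs0 ht hst, div_eq_mul_inv]
          rw [Finset.sum_congr rfl hstep,
            aux_reindex (fun γ : ZMod p => α ^ (t : ℕ) * (α ^ (t : ℕ) - γ)⁻¹)
              hmem hinj hsurj,
            Finset.sum_erase_eq_sub (Finset.mem_univ (0 : ZMod p))]
          have hfull : ∑ γ : ZMod p, α ^ (t : ℕ) * (α ^ (t : ℕ) - γ)⁻¹ = 0 := by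
            have hr : ∑ γ' : ZMod p,
                α ^ (t : ℕ) * (α ^ (t : ℕ) - α ^ (t : ℕ) * γ')⁻¹
                = ∑ γ : ZMod p, α ^ (t : ℕ) * (α ^ (t : ℕ) - γ)⁻¹ :=
              Fintype.sum_equiv (Equiv.mulLeft₀ (α ^ (t : ℕ)) htne) _ _ (fun _ => rfl)
            rw [← hr]
            have hterm : ∀ γ' : ZMod p,
                α ^ (t : ℕ) * (α ^ (t : ℕ) - α ^ (t : ℕ) * γ')⁻¹ = (1 - γ')⁻¹ := by
              intro γ'
              rw [show α ^ (t : ℕ) - α ^ (t : ℕ) * γ' = α ^ (t : ℕ) * (1 - γ') by ring,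
                mul_inv, ← mul_assoc, mul_inv_cancel₀ htne, one_mul]
            rw [Finset.sum_congr rfl (fun γ' _ => hterm γ')]
            have hR : ∑ γ' : ZMod p, (1 - γ')⁻¹ = ∑ δ : ZMod p, δ⁻¹ :=
              Fintype.sum_bijective (fun x : ZMod p => 1 - x)
                (Function.Involutive.bijective (fun x => by ring))
                (fun γ => (1 - γ)⁻¹) (fun δ => δ⁻¹) (fun _ => rfl)
            rw [hR, aux_sum_inv hp3]
          rw [hfull, sub_zero, mul_inv_cancel₀ htne]
          ring
      -- first column with power coefficients
      have hKI0 : ∀ m : ℕ, 1 ≤ m → m ≤ p - 2 →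
          ∑ s ∈ Finset.univ.erase (0 : Fin p), (α ^ (s : ℕ)) ^ m * Q s 0 = 0 := by
        intro m hm1 hm2
        have hstep : ∀ s ∈ Finset.univ.erase (0 : Fin p),
            (α ^ (s : ℕ)) ^ m * Q s 0 = (fun γ : ZMod p => γ ^ m) (α ^ (s : ℕ)) := by
          intro s hs
          rw [(hfirst s (Finset.mem_erase.mp hs).1).1, mul_one]
        rw [Finset.sum_congr rfl hstep,
          aux_reindex (fun γ : ZMod p => γ ^ m) hmem hinj hsurj,
          Finset.sum_erase_eq_sub (Finset.mem_univ (0 : ZMod p)),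
          aux_sum_pow (by omega : m < p - 1), zero_pow (by omega : m ≠ 0), sub_zero]
      -- other columns with power coefficients
      have hKI : ∀ m : ℕ, 1 ≤ m → m ≤ p - 2 → ∀ t : Fin p, t ≠ 0 →
          ∑ s ∈ Finset.univ.erase (0 : Fin p), (α ^ (s : ℕ)) ^ m * Q s t
            = (m : ZMod p) * (α ^ (t : ℕ)) ^ m := by
        intro m hm1 hm2 t ht
        have htne : α ^ (t : ℕ) ≠ 0 := pow_ne_zero _ hα0
        have hstep : ∀ s ∈ Finset.univ.erase (0 : Fin p),
            (α ^ (s : ℕ)) ^ m * Q s t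
              = (fun γ : ZMod p => γ ^ m * (α ^ (t : ℕ) * (α ^ (t : ℕ) - γ)⁻¹))
                (α ^ (s : ℕ)) := by
          intro s hs
          have hs0 : s ≠ 0 := (Finset.mem_erase.mp hs).1
          by_cases hst : s = t
          · subst hst
            rw [hdiag]
            simp
          · rw [hentry s t hs0 ht hst, div_eq_mul_inv]
        rw [Finset.sum_congr rfl hstep,
          aux_reindex (fun γ : ZMod p => γ ^ m * (α ^ (t : ℕ) * (α ^ (t : ℕ) - γ)⁻¹))
            hmem hinj hsurj,
          Finset.sum_erase_eq_sub (Finset.mem_univ (0 : ZMod p))]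
        have hzero : (0 : ZMod p) ^ m * (α ^ (t : ℕ) * (α ^ (t : ℕ) - 0)⁻¹) = 0 := by
          rw [zero_pow (by omega : m ≠ 0), zero_mul]
        rw [hzero, sub_zero]
        have hr : ∑ γ' : ZMod p, (α ^ (t : ℕ) * γ') ^ m
              * (α ^ (t : ℕ) * (α ^ (t : ℕ) - α ^ (t : ℕ) * γ')⁻¹)
            = ∑ γ : ZMod p, γ ^ m * (α ^ (t : ℕ) * (α ^ (t : ℕ) - γ)⁻¹) :=
          Fintype.sum_equiv (Equiv.mulLeft₀ (α ^ (t : ℕ)) htne) _ _ (fun _ => rfl)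
        rw [← hr]
        have hterm : ∀ γ' : ZMod p, (α ^ (t : ℕ) * γ') ^ m
            * (α ^ (t : ℕ) * (α ^ (t : ℕ) - α ^ (t : ℕ) * γ')⁻¹)
            = (α ^ (t : ℕ)) ^ m * (γ' ^ m * (1 - γ')⁻¹) := by
          intro γ'
          rw [show α ^ (t : ℕ) - α ^ (t : ℕ) * γ' = α ^ (t : ℕ) * (1 - γ') by ring,
            mul_inv, ← mul_assoc (α ^ (t : ℕ)), mul_inv_cancel₀ htne, one_mul, mul_pow]
          ring
        rw [Finset.sum_congr rfl (fun γ' _ => hterm γ'), ← Finset.mul_sum,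
          aux_key_sum hm1 hm2]
        ring
      -- (a) the sum of x over nonzero coordinates vanishes
      have hsum0 : ∑ t ∈ Finset.univ.erase (0 : Fin p), x t = 0 := by
        have h := hker 0
        rw [← Finset.add_sum_erase Finset.univ _ (Finset.mem_univ (0 : Fin p)),
          hdiag 0, zero_mul, zero_add] at h
        have hone : ∀ t ∈ Finset.univ.erase (0 : Fin p), Q 0 t * x t = x t :=
          fun t ht => by rw [(hfirst t (Finset.mem_erase.mp ht).1).2, one_mul]
        rwa [Finset.sum_congr rfl hone] at h
      -- (c) x 0 = 0
      have hx00 : x 0 = 0 := by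
        have h : ∑ s ∈ Finset.univ.erase (0 : Fin p), ∑ t : Fin p, Q s t * x t = 0 :=
          Finset.sum_eq_zero (fun s _ => hker s)
        rw [Finset.sum_comm] at h
        have hcol : ∀ t ∈ (Finset.univ : Finset (Fin p)),
            ∑ s ∈ Finset.univ.erase (0 : Fin p), Q s t * x t = -x t := by
          intro t _
          rw [← Finset.sum_mul, hKIc t]
          ring
        rw [Finset.sum_congr rfl hcol, Finset.sum_neg_distrib, neg_eq_zero,
          ← Finset.add_sum_erase Finset.univ x (Finset.mem_univ (0 : Fin p)),
          hsum0, add_zero] at h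
        exact h
      -- (b) weighted sums of x vanish
      have hsumM : ∀ m : ℕ, 1 ≤ m → m ≤ p - 2 →
          ∑ t ∈ Finset.univ.erase (0 : Fin p), (α ^ (t : ℕ)) ^ m * x t = 0 := by
        intro m hm1 hm2
        have h : ∑ s ∈ Finset.univ.erase (0 : Fin p),
            ∑ t : Fin p, (α ^ (s : ℕ)) ^ m * (Q s t * x t) = 0 :=
          Finset.sum_eq_zero (fun s _ => by rw [← Finset.mul_sum, hker s, mul_zero])
        rw [Finset.sum_comm] at h
        have hin : ∀ t ∈ (Finset.univ : Finset (Fin p)),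
            ∑ s ∈ Finset.univ.erase (0 : Fin p), (α ^ (s : ℕ)) ^ m * (Q s t * x t)
              = (∑ s ∈ Finset.univ.erase (0 : Fin p), (α ^ (s : ℕ)) ^ m * Q s t)
                * x t := by
          intro t _
          rw [Finset.sum_mul]
          exact Finset.sum_congr rfl (fun s _ => by ring)
        rw [Finset.sum_congr rfl hin,
          ← Finset.add_sum_erase Finset.univ _ (Finset.mem_univ (0 : Fin p)),
          hKI0 m hm1 hm2, zero_mul, zero_add] at h
        have hin2 : ∀ t ∈ Finset.univ.erase (0 : Fin p),
            (∑ s ∈ Finset.univ.erase (0 : Fin p), (α ^ (s : ℕ)) ^ m * Q s t) * x t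
              = (m : ZMod p) * ((α ^ (t : ℕ)) ^ m * x t) := by
          intro t ht
          rw [hKI m hm1 hm2 t (Finset.mem_erase.mp ht).1]
          ring
        rw [Finset.sum_congr rfl hin2, ← Finset.mul_sum] at h
        have hmne : (m : ZMod p) ≠ 0 := by
          rw [Ne, ZMod.natCast_eq_zero_iff]
          intro hdvd
          have := Nat.le_of_dvd (by omega) hdvd
          omega
        exact (mul_eq_zero.mp h).resolve_left hmne
      -- transfer sums over nonzero indices of Fin p to Fin (p-1)
      have htrans : ∀ g : Fin p → ZMod p,
          ∑ t ∈ Finset.univ.erase (0 : Fin p), g t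
            = ∑ i : Fin (p - 1), g ⟨(i : ℕ) + 1, by have := i.isLt; omega⟩ := by
        intro g
        refine Finset.sum_nbij'
          (fun t => (⟨(t : ℕ) - 1, by have := t.isLt; omega⟩ : Fin (p - 1)))
          (fun i => (⟨(i : ℕ) + 1, by have := i.isLt; omega⟩ : Fin p))
          (fun a _ => Finset.mem_univ _) ?_ ?_ ?_ ?_
        · intro i _
          refine Finset.mem_erase.mpr ⟨?_, Finset.mem_univ _⟩
          simp only [ne_eq, Fin.ext_iff, Fin.val_zero]
          omega
        · intro a ha
          have h2 : (a : ℕ) ≠ 0 := fun h =>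
            (Finset.mem_erase.mp ha).1 (Fin.ext (by simp [h]))
          exact Fin.ext (by simp; omega)
        · intro i _
          exact Fin.ext (by simp)
        · intro a ha
          have h2 : (a : ℕ) ≠ 0 := fun h =>
            (Finset.mem_erase.mp ha).1 (Fin.ext (by simp [h]))
          exact congrArg g (Fin.ext (by simp; omega))
      -- the Vandermonde matrix
      have hvd : (Matrix.vandermonde
          (fun i : Fin (p - 1) => α ^ ((i : ℕ) + 1))).det ≠ 0 := by
        rw [Matrix.det_vandermonde]
        refine Finset.prod_ne_zero_iff.mpr (fun i _ => ?_)
        refine Finset.prod_ne_zero_iff.mpr (fun j hj => ?_)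
        have hij : i < j := Finset.mem_Ioi.mp hj
        refine sub_ne_zero.mpr (fun h => ?_)
        have hm := (hpow _ _).mp h
        have heq := aux_mod_helper (n := p - 1)
          (by omega) (by have := j.isLt; omega)
          (by omega) (by have := i.isLt; omega) hm
        have : (i : ℕ) < (j : ℕ) := hij
        omega
      have hvdm : ∀ j : Fin (p - 1), ∑ i : Fin (p - 1),
          (α ^ ((i : ℕ) + 1)) ^ (j : ℕ)
            * x ⟨(i : ℕ) + 1, by have := i.isLt; omega⟩ = 0 := by
        intro j
        have hj2 : (j : ℕ) ≤ p - 2 := by have := j.isLt; omega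
        by_cases hj0 : (j : ℕ) = 0
        · have hstep : ∀ i : Fin (p - 1),
              (α ^ ((i : ℕ) + 1)) ^ (j : ℕ)
                * x ⟨(i : ℕ) + 1, by have := i.isLt; omega⟩
              = x ⟨(i : ℕ) + 1, by have := i.isLt; omega⟩ := by
            intro i
            rw [hj0, pow_zero, one_mul]
          rw [Finset.sum_congr rfl (fun i _ => hstep i), ← htrans x]
          exact hsum0
        · have h2 := htrans (fun t => (α ^ (t : ℕ)) ^ (j : ℕ) * x t)
          rw [hsumM (j : ℕ) (by omega) hj2] at h2
          exact h2.symm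
      -- conclude the nonzero coordinates vanish
      have hy0 : (fun i : Fin (p - 1) =>
          x ⟨(i : ℕ) + 1, by have := i.isLt; omega⟩) = 0 := by
        apply Matrix.eq_zero_of_mulVec_eq_zero
          (M := (Matrix.vandermonde (fun i : Fin (p - 1) => α ^ ((i : ℕ) + 1))).transpose)
        · rw [Matrix.det_transpose]
          exact hvd
        · funext j
          simp only [Matrix.mulVec, dotProduct, Matrix.transpose_apply,
            Matrix.vandermonde_apply, Pi.zero_apply]
          exact hvdm j
      funext t
      by_cases ht : t = 0
      · rw [ht]
        simpa using hx00
      · have h1t : 1 ≤ (t : ℕ) := (hval t ht).1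
        have hco := congrFun hy0 ⟨(t : ℕ) - 1, by have := t.isLt; omega⟩
        simp only [Pi.zero_apply] at hco
        have heq : (⟨((⟨(t : ℕ) - 1, by have := t.isLt; omega⟩ : Fin (p - 1)) : ℕ) + 1,
            by have := t.isLt; omega⟩ : Fin p) = t := Fin.ext (by simp; omega)
        rw [← heq]
        simpa using hco
    · -- (ii) 2x2 submatrices
      intro i j k l hij hkl
      rw [Matrix.det_fin_two_of]
      by_cases hik : i = k
      · subst hik
        rw [hdiag i, zero_mul, zero_sub, neg_ne_zero]
        exact mul_ne_zero (hQne i l hkl) (hQne j i (Ne.symm hij))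
      · by_cases hjl : j = l
        · subst hjl
          rw [hdiag j, mul_zero, zero_sub, neg_ne_zero]
          exact mul_ne_zero (hQne i j hij) (hQne j k (Ne.symm hkl))
        · by_cases hil : i = l
          · subst hil
            rw [hdiag i, zero_mul, sub_zero]
            exact mul_ne_zero (hQne i k hik) (hQne j i (Ne.symm hij))
          · by_cases hjk : j = k
            · subst hjk
              rw [hdiag j, mul_zero, sub_zero]
              exact mul_ne_zero (hQne i j hij) (hQne j l hjl)
            · -- all four entries off-diagonal
              by_cases hi0 : i = 0
              · subst hi0
                have hk0 : k ≠ 0 := Ne.symm hik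
                have hl0 : l ≠ 0 := Ne.symm hil
                have hj0 : j ≠ 0 := Ne.symm hij
                rw [(hfirst k hk0).2, (hfirst l hl0).2, one_mul, one_mul,
                  hentry j l hj0 hl0 hjl, hentry j k hj0 hk0 hjk]
                have hne1 : α ^ (l : ℕ) - α ^ (j : ℕ) ≠ 0 :=
                  sub_ne_zero.mpr (hdist l j hl0 hj0 (fun h => hjl (h.symm)))
                have hne2 : α ^ (k : ℕ) - α ^ (j : ℕ) ≠ 0 :=
                  sub_ne_zero.mpr (hdist k j hk0 hj0 (fun h => hjk (h.symm)))
                have hne3 : α ^ (k : ℕ) - α ^ (l : ℕ) ≠ 0 :=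
                  sub_ne_zero.mpr (hdist k l hk0 hl0 hkl)
                have hj : α ^ (j : ℕ) ≠ 0 := pow_ne_zero _ hα0
                have key : α ^ (l : ℕ) / (α ^ (l : ℕ) - α ^ (j : ℕ))
                    - α ^ (k : ℕ) / (α ^ (k : ℕ) - α ^ (j : ℕ))
                    = α ^ (j : ℕ) * (α ^ (k : ℕ) - α ^ (l : ℕ))
                      / ((α ^ (l : ℕ) - α ^ (j : ℕ)) * (α ^ (k : ℕ) - α ^ (j : ℕ))) := by
                  field_simp
                  ring
                rw [key]
                exact div_ne_zero (mul_ne_zero hj hne3) (mul_ne_zero hne1 hne2)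
              · by_cases hj0 : j = 0
                · subst hj0
                  have hk0 : k ≠ 0 := Ne.symm hjk
                  have hl0 : l ≠ 0 := Ne.symm hjl
                  rw [(hfirst k hk0).2, (hfirst l hl0).2, mul_one, mul_one,
                    hentry i k hi0 hk0 hik, hentry i l hi0 hl0 hil]
                  have hne1 : α ^ (k : ℕ) - α ^ (i : ℕ) ≠ 0 :=
                    sub_ne_zero.mpr (hdist k i hk0 hi0 (fun h => hik (h.symm)))
                  have hne2 : α ^ (l : ℕ) - α ^ (i : ℕ) ≠ 0 :=
                    sub_ne_zero.mpr (hdist l i hl0 hi0 (fun h => hil (h.symm)))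
                  have hne3 : α ^ (l : ℕ) - α ^ (k : ℕ) ≠ 0 :=
                    sub_ne_zero.mpr (hdist l k hl0 hk0 (Ne.symm hkl))
                  have hi : α ^ (i : ℕ) ≠ 0 := pow_ne_zero _ hα0
                  have key : α ^ (k : ℕ) / (α ^ (k : ℕ) - α ^ (i : ℕ))
                      - α ^ (l : ℕ) / (α ^ (l : ℕ) - α ^ (i : ℕ))
                      = α ^ (i : ℕ) * (α ^ (l : ℕ) - α ^ (k : ℕ))
                        / ((α ^ (k : ℕ) - α ^ (i : ℕ)) * (α ^ (l : ℕ) - α ^ (i : ℕ))) := by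
                    field_simp
                    ring
                  rw [key]
                  exact div_ne_zero (mul_ne_zero hi hne3) (mul_ne_zero hne1 hne2)
                · by_cases hk0 : k = 0
                  · subst hk0
                    have hl0 : l ≠ 0 := Ne.symm hkl
                    rw [(hfirst i hi0).1, (hfirst j hj0).1, one_mul, mul_one,
                      hentry j l hj0 hl0 hjl, hentry i l hi0 hl0 hil]
                    have hne1 : α ^ (l : ℕ) - α ^ (j : ℕ) ≠ 0 :=
                      sub_ne_zero.mpr (hdist l j hl0 hj0 (fun h => hjl (h.symm)))
                    have hne2 : α ^ (l : ℕ) - α ^ (i : ℕ) ≠ 0 :=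
                      sub_ne_zero.mpr (hdist l i hl0 hi0 (fun h => hil (h.symm)))
                    have hne3 : α ^ (j : ℕ) - α ^ (i : ℕ) ≠ 0 :=
                      sub_ne_zero.mpr (hdist j i hj0 hi0 (Ne.symm hij))
                    have hl : α ^ (l : ℕ) ≠ 0 := pow_ne_zero _ hα0
                    have key : α ^ (l : ℕ) / (α ^ (l : ℕ) - α ^ (j : ℕ))
                        - α ^ (l : ℕ) / (α ^ (l : ℕ) - α ^ (i : ℕ))
                        = α ^ (l : ℕ) * (α ^ (j : ℕ) - α ^ (i : ℕ))
                          / ((α ^ (l : ℕ) - α ^ (j : ℕ)) * (α ^ (l : ℕ) - α ^ (i : ℕ))) := by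
                      field_simp
                      ring
                    rw [key]
                    exact div_ne_zero (mul_ne_zero hl hne3) (mul_ne_zero hne1 hne2)
                  · by_cases hl0 : l = 0
                    · subst hl0
                      rw [(hfirst i hi0).1, (hfirst j hj0).1, mul_one, one_mul,
                        hentry i k hi0 hk0 hik, hentry j k hj0 hk0 hjk]
                      have hne1 : α ^ (k : ℕ) - α ^ (i : ℕ) ≠ 0 :=
                        sub_ne_zero.mpr (hdist k i hk0 hi0 (fun h => hik (h.symm)))
                      have hne2 : α ^ (k : ℕ) - α ^ (j : ℕ) ≠ 0 :=
                        sub_ne_zero.mpr (hdist k j hk0 hj0 (fun h => hjk (h.symm)))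
                      have hne3 : α ^ (i : ℕ) - α ^ (j : ℕ) ≠ 0 :=
                        sub_ne_zero.mpr (hdist i j hi0 hj0 hij)
                      have hk : α ^ (k : ℕ) ≠ 0 := pow_ne_zero _ hα0
                      have key : α ^ (k : ℕ) / (α ^ (k : ℕ) - α ^ (i : ℕ))
                          - α ^ (k : ℕ) / (α ^ (k : ℕ) - α ^ (j : ℕ))
                          = α ^ (k : ℕ) * (α ^ (i : ℕ) - α ^ (j : ℕ))
                            / ((α ^ (k : ℕ) - α ^ (i : ℕ)) * (α ^ (k : ℕ) - α ^ (j : ℕ))) := by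
                        field_simp
                        ring
                      rw [key]
                      exact div_ne_zero (mul_ne_zero hk hne3) (mul_ne_zero hne1 hne2)
                    · -- generic: all indices nonzero
                      rw [hentry i k hi0 hk0 hik, hentry j l hj0 hl0 hjl,
                        hentry i l hi0 hl0 hil, hentry j k hj0 hk0 hjk]
                      have hne1 : α ^ (k : ℕ) - α ^ (i : ℕ) ≠ 0 :=
                        sub_ne_zero.mpr (hdist k i hk0 hi0 (fun h => hik (h.symm)))
                      have hne2 : α ^ (l : ℕ) - α ^ (j : ℕ) ≠ 0 :=
                        sub_ne_zero.mpr (hdist l j hl0 hj0 (fun h => hjl (h.symm)))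
                      have hne3 : α ^ (l : ℕ) - α ^ (i : ℕ) ≠ 0 :=
                        sub_ne_zero.mpr (hdist l i hl0 hi0 (fun h => hil (h.symm)))
                      have hne4 : α ^ (k : ℕ) - α ^ (j : ℕ) ≠ 0 :=
                        sub_ne_zero.mpr (hdist k j hk0 hj0 (fun h => hjk (h.symm)))
                      have hne5 : α ^ (j : ℕ) - α ^ (i : ℕ) ≠ 0 :=
                        sub_ne_zero.mpr (hdist j i hj0 hi0 (Ne.symm hij))
                      have hne6 : α ^ (k : ℕ) - α ^ (l : ℕ) ≠ 0 :=
                        sub_ne_zero.mpr (hdist k l hk0 hl0 hkl)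
                      have hk : α ^ (k : ℕ) ≠ 0 := pow_ne_zero _ hα0
                      have hl : α ^ (l : ℕ) ≠ 0 := pow_ne_zero _ hα0
                      have key : α ^ (k : ℕ) / (α ^ (k : ℕ) - α ^ (i : ℕ))
                            * (α ^ (l : ℕ) / (α ^ (l : ℕ) - α ^ (j : ℕ)))
                          - α ^ (l : ℕ) / (α ^ (l : ℕ) - α ^ (i : ℕ))
                            * (α ^ (k : ℕ) / (α ^ (k : ℕ) - α ^ (j : ℕ)))
                          = α ^ (k : ℕ) * α ^ (l : ℕ) * (α ^ (j : ℕ) - α ^ (i : ℕ))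
                              * (α ^ (k : ℕ) - α ^ (l : ℕ))
                            / ((α ^ (k : ℕ) - α ^ (i : ℕ)) * (α ^ (l : ℕ) - α ^ (j : ℕ))
                              * (α ^ (l : ℕ) - α ^ (i : ℕ)) * (α ^ (k : ℕ) - α ^ (j : ℕ))) := by
                        field_simp
                        ring
                      rw [key]
                      exact div_ne_zero
                        (mul_ne_zero (mul_ne_zero (mul_ne_zero hk hl) hne5) hne6)
                        (mul_ne_zero (mul_ne_zero (mul_ne_zero hne1 hne2) hne3) hne4)
    · -- (iii) skew-symmetry
      intro s t hs ht hst
      rw [hentry s t hs ht hst, hentry t s ht hs (Ne.symm hst)]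
      have h1 : α ^ (t : ℕ) - α ^ (s : ℕ) ≠ 0 :=
        sub_ne_zero.mpr (hdist t s ht hs (Ne.symm hst))
      have h2 : α ^ (s : ℕ) - α ^ (t : ℕ) ≠ 0 :=
        sub_ne_zero.mpr (hdist s t hs ht hst)
      field_simp
      ring
    · -- (iv) circulant
      intro s t s' t' hs ht hs' ht' hmod
      have hd : ((p : ℤ) - 1) ∣ (((t' : ℕ) : ℤ) - ((s' : ℕ) : ℤ)
          - (((t : ℕ) : ℤ) - ((s : ℕ) : ℤ))) := Int.ModEq.dvd hmod
      obtain ⟨hs1, hs2⟩ := hval s hs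
      obtain ⟨ht1, ht2⟩ := hval t ht
      obtain ⟨hs1', hs2'⟩ := hval s' hs'
      obtain ⟨ht1', ht2'⟩ := hval t' ht'
      by_cases hst : s = t
      · have hd' : ((p : ℤ) - 1) ∣ (((t' : ℕ) : ℤ) - ((s' : ℕ) : ℤ)) := by
          have : (((t : ℕ) : ℤ) - ((s : ℕ) : ℤ)) = 0 := by rw [hst]; ring
          rw [this, sub_zero] at hd
          exact hd
        have ht's' : t' = s' := by
          have h0 : (((t' : ℕ) : ℤ) - ((s' : ℕ) : ℤ)) = 0 :=
            aux_int_helper hd' (by rw [abs_lt]; constructor <;> push_cast <;> omega)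
          have : ((t' : ℕ) : ℤ) = ((s' : ℕ) : ℤ) := by linarith
          exact Fin.ext (by exact_mod_cast this)
        rw [hst, ht's', hdiag, hdiag]
      · have hs't' : s' ≠ t' := by
          intro h
          apply hst
          have hd' : ((p : ℤ) - 1) ∣ (((t : ℕ) : ℤ) - ((s : ℕ) : ℤ)) := by
            have h0 : (((t' : ℕ) : ℤ) - ((s' : ℕ) : ℤ)) = 0 := by rw [h]; ring
            rw [h0, zero_sub] at hd
            exact (dvd_neg.mp hd)
          have h0 : (((t : ℕ) : ℤ) - ((s : ℕ) : ℤ)) = 0 :=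
            aux_int_helper hd' (by rw [abs_lt]; constructor <;> push_cast <;> omega)
          have : ((t : ℕ) : ℤ) = ((s : ℕ) : ℤ) := by linarith
          exact Fin.ext (by exact_mod_cast this.symm)
        rw [hentry s t hs ht hst, hentry s' t' hs' ht' hs't']
        have h1 : α ^ (t : ℕ) - α ^ (s : ℕ) ≠ 0 :=
          sub_ne_zero.mpr (hdist t s ht hs (Ne.symm hst))
        have h2 : α ^ (t' : ℕ) - α ^ (s' : ℕ) ≠ 0 :=
          sub_ne_zero.mpr (hdist t' s' ht' hs' (Ne.symm hs't'))
        rw [div_eq_div_iff h1 h2]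
        have hkey : α ^ ((t : ℕ) + (s' : ℕ)) = α ^ ((t' : ℕ) + (s : ℕ)) := by
          apply (hpow _ _).mpr
          rw [Nat.modEq_iff_dvd]
          have hc : ((p - 1 : ℕ) : ℤ) = (p : ℤ) - 1 := by
            have := hp.two_le; push_cast [Nat.cast_sub (by omega : 1 ≤ p)]; ring
          rw [hc]
          have : (((t' : ℕ) + (s : ℕ) : ℕ) : ℤ) - (((t : ℕ) + (s' : ℕ) : ℕ) : ℤ)
              = (((t' : ℕ) : ℤ) - ((s' : ℕ) : ℤ) - (((t : ℕ) : ℤ) - ((s : ℕ) : ℤ))) := by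
            push_cast; ring
          rw [this]
          exact hd
        rw [pow_add, pow_add] at hkey
        linear_combination -hkey
end

section
/- Let X be a finite set with |X| = v, let 0 ≤ t ≤ s, and suppose φ : X^s → X^s is a (t,s,v)-AONT. Then the inverse bijection φ^{−1} : X^s → X^s is an (s−t, s, v)-AONT. In particular, if a (t,s,v)-AONT exists, then an (s−t,s,v)-AONT exists. -/
/-- A map φ : X^s → X^s is a (t,s,|X|)-AONT if φ is a bijection and for all subsets
I, J ⊆ {1,…,s} with |I| = |J| = t, the map x ↦ ((x_i)_{i∈I}, (φ(x)_j)_{j∉J}) is a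
bijection. -/
def IsAONT {X : Type*} {s : ℕ} (t : ℕ) (φ : (Fin s → X) → (Fin s → X)) : Prop :=
  Function.Bijective φ ∧
  ∀ I J : Finset (Fin s), I.card = t → J.card = t →
    Function.Bijective (fun x : Fin s → X =>
      ((fun i : {i : Fin s // i ∈ I} => x i.1),
       (fun j : {j : Fin s // j ∉ J} => φ x j.1)))

/-- If φ is a (t,s,v)-AONT, then its inverse bijection is an (s−t,s,v)-AONT. -/
theorem inverse_of_AONT_is_AONT
    (X : Type*) [Fintype X] (v t s : ℕ) (hX : Fintype.card X = v) (ht : t ≤ s)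
    (φ ψ : (Fin s → X) → (Fin s → X)) (hφ : IsAONT t φ)
    (hl : Function.LeftInverse ψ φ) (hr : Function.RightInverse ψ φ) :
    IsAONT (s - t) ψ := by
  classical
  refine ⟨⟨hr.injective, hl.surjective⟩, ?_⟩
  intro I J hI hJ
  have hJc : Jᶜ.card = t := by
    rw [Finset.card_compl, hJ, Fintype.card_fin]; omega
  have hIc : Iᶜ.card = t := by
    rw [Finset.card_compl, hI, Fintype.card_fin]; omega
  have key := hφ.2 Jᶜ Iᶜ hJc hIc
  -- It suffices to show injectivity, since the cardinalities match.
  rw [Fintype.bijective_iff_injective_and_card]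
  constructor
  · intro x x' h
    have h1 : ∀ i ∈ I, x i = x' i := by
      intro i hi
      exact congrFun (congrArg Prod.fst h) ⟨i, hi⟩
    have h2 : ∀ j ∉ J, ψ x j = ψ x' j := by
      intro j hj
      exact congrFun (congrArg Prod.snd h) ⟨j, hj⟩
    have := key.injective (a₁ := ψ x) (a₂ := ψ x') ?_
    · exact hr.injective this
    · simp only [Prod.mk.injEq, hr x, hr x']
      constructor
      · funext i
        exact h2 i.1 (Finset.mem_compl.mp i.2)
      · funext j
        exact h1 j.1 (by have := j.2; simp only [Finset.mem_compl, not_not] at this; exact this)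
  · have c1 : Fintype.card {i : Fin s // i ∈ I} = I.card := Fintype.card_coe I
    have c2 : Fintype.card {j : Fin s // j ∉ J} = s - J.card := by
      rw [Fintype.card_subtype_compl]
      simp [Fintype.card_coe]
    rw [Fintype.card_prod, Fintype.card_fun, Fintype.card_fun, Fintype.card_fun,
      c1, c2, hI, hJ, Fintype.card_fin, ← pow_add]
    congr 1
    omega
end

section
/- Let q be a prime power, let 0 ≤ t ≤ s, and let M be an invertible s×s matrix over F_q such that every t×t submatrix of M (obtained by selecting any t rows and any t columns) is invertible. Then every (s−t)×(s−t) submatrix of the inverse matrix M^{−1} is invertible. That is, if M defines a linear (t,s,q)-AONT, then M^{−1} defines a linear (s−t,s,q)-AONT. -/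
open scoped Matrix

/-- Auxiliary: summing a function supported on the range of an injective map. -/
lemma sum_eq_sum_comp_of_support {F : Type*} [AddCommMonoid F] {m s : ℕ}
    (f : Fin m → Fin s) (hf : Function.Injective f) (g : Fin s → F)
    (hg : ∀ k, (∀ j, f j ≠ k) → g k = 0) :
    ∑ k, g k = ∑ j, g (f j) := by
  have h1 : ∑ k ∈ Finset.univ.image f, g k = ∑ j, g (f j) :=
    Finset.sum_image (fun x _ y _ h => hf h)
  rw [← h1]
  refine (Finset.sum_subset (Finset.subset_univ _) ?_).symm
  intro k _ hk
  exact hg k (fun j hj => hk (Finset.mem_image.mpr ⟨j, Finset.mem_univ _, hj⟩))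

/-- If M is an invertible s×s matrix over F_q all of whose t×t submatrices are
invertible (i.e. M defines a linear (t,s,q)-AONT), then every (s−t)×(s−t) submatrix of
M⁻¹ is invertible (i.e. M⁻¹ defines a linear (s−t,s,q)-AONT). -/
theorem inverse_of_linear_AONT_is_linear_AONT
    (q : ℕ) (hq : IsPrimePow q) (F : Type*) [Field F] [Fintype F]
    (hF : Fintype.card F = q)
    (t s : ℕ) (ht : t ≤ s)
    (M : Matrix (Fin s) (Fin s) F) (hM : M.det ≠ 0)
    (hsub : ∀ r c : Fin t → Fin s, Function.Injective r → Function.Injective c →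
      (M.submatrix r c).det ≠ 0) :
    ∀ r c : Fin (s - t) → Fin s, Function.Injective r → Function.Injective c →
      ((M⁻¹).submatrix r c).det ≠ 0 := by
  intro r c hr hc hdet
  -- a nonzero kernel vector of the submatrix of M⁻¹
  obtain ⟨v, hv0, hv⟩ := Matrix.exists_mulVec_eq_zero_iff.mpr hdet
  classical
  -- extend v to a vector y on Fin s supported on the range of c
  set y : Fin s → F := Function.extend c v 0 with hy
  have hyc : ∀ j, y (c j) = v j := fun j => hc.extend_apply v 0 j
  have hyc' : ∀ k, (∀ j, c j ≠ k) → y k = 0 := by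
    intro k hk
    rw [hy, Function.extend_apply' _ _ _ (by rintro ⟨j, rfl⟩; exact hk j rfl)]
    rfl
  set z : Fin s → F := M⁻¹ *ᵥ y with hz
  have hMdetUnit : IsUnit M.det := isUnit_iff_ne_zero.mpr hM
  have hMz : M *ᵥ z = y := by
    rw [hz, Matrix.mulVec_mulVec, Matrix.mul_nonsing_inv M hMdetUnit, Matrix.one_mulVec]
  -- z vanishes on the range of r
  have hzr : ∀ i, z (r i) = 0 := by
    intro i
    have := congrFun hv i
    simp only [Matrix.mulVec, Matrix.submatrix_apply, Pi.zero_apply, dotProduct] at this ⊢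
    have hsum : ∑ k, M⁻¹ (r i) k * y k = ∑ j, M⁻¹ (r i) (c j) * y (c j) :=
      sum_eq_sum_comp_of_support c hc _ (fun k hk => by rw [hyc' k hk, mul_zero])
    calc z (r i) = ∑ k, M⁻¹ (r i) k * y k := rfl
      _ = ∑ j, M⁻¹ (r i) (c j) * v j := by rw [hsum]; simp [hyc]
      _ = 0 := this
  -- complements of the ranges of r and c
  set R : Finset (Fin s) := Finset.univ.image r with hR
  set C : Finset (Fin s) := Finset.univ.image c with hC
  have hRcard : Rᶜ.card = t := by
    rw [Finset.card_compl, hR, Finset.card_image_of_injective _ hr]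
    simp [Nat.sub_sub_self ht]
  have hCcard : Cᶜ.card = t := by
    rw [Finset.card_compl, hC, Finset.card_image_of_injective _ hc]
    simp [Nat.sub_sub_self ht]
  set ρ : Fin t → Fin s := fun j => Rᶜ.orderEmbOfFin hRcard j with hρ
  set σ : Fin t → Fin s := fun i => Cᶜ.orderEmbOfFin hCcard i with hσ
  have hρinj : Function.Injective ρ := (Rᶜ.orderEmbOfFin hRcard).injective
  have hσinj : Function.Injective σ := (Cᶜ.orderEmbOfFin hCcard).injective
  have hρmem : ∀ j, ρ j ∈ Rᶜ := fun j => Finset.orderEmbOfFin_mem _ _ _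
  have hσmem : ∀ i, σ i ∈ Cᶜ := fun i => Finset.orderEmbOfFin_mem _ _ _
  have hρrange : Set.range ρ = ((Rᶜ : Finset (Fin s)) : Set (Fin s)) :=
    Finset.range_orderEmbOfFin _ _
  -- z vanishes outside the range of ρ
  have hzρ : ∀ k, (∀ j, ρ j ≠ k) → z k = 0 := by
    intro k hk
    have : k ∈ R := by
      by_contra hkR
      have hmem : k ∈ ((Rᶜ : Finset (Fin s)) : Set (Fin s)) := by simpa using hkR
      rw [← hρrange] at hmem
      obtain ⟨j, hj⟩ := hmem
      exact hk j hj
    obtain ⟨i, _, rfl⟩ := Finset.mem_image.mp this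
    exact hzr i
  -- the kernel vector of the complementary submatrix of M
  have hkernel : M.submatrix σ ρ *ᵥ (z ∘ ρ) = 0 := by
    funext i
    have hyσ : y (σ i) = 0 := by
      apply hyc'
      intro j hj
      have := hσmem i
      rw [← hj] at this
      simp [hC] at this
    have := congrFun hMz (σ i)
    simp only [Matrix.mulVec, dotProduct] at this
    have hsum : ∑ k, M (σ i) k * z k = ∑ j, M (σ i) (ρ j) * z (ρ j) :=
      sum_eq_sum_comp_of_support ρ hρinj _ (fun k hk => by rw [hzρ k hk, mul_zero])
    simp only [Matrix.mulVec, dotProduct, Matrix.submatrix_apply, Pi.zero_apply,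
      Function.comp_apply]
    rw [← hsum, this, hyσ]
  have hzρ0 : z ∘ ρ ≠ 0 := by
    intro hzero
    -- then z = 0 everywhere
    have hzall : z = 0 := by
      funext k
      by_cases hkR : k ∈ R
      · obtain ⟨i, _, rfl⟩ := Finset.mem_image.mp hkR
        exact hzr i
      · have hmem : k ∈ ((Rᶜ : Finset (Fin s)) : Set (Fin s)) := by simpa using hkR
        rw [← hρrange] at hmem
        obtain ⟨j, rfl⟩ := hmem
        exact congrFun hzero j
    have hy0 : y = 0 := by rw [← hMz, hzall, Matrix.mulVec_zero]
    apply hv0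
    funext j
    rw [← hyc j, hy0]; rfl
  exact hsub σ ρ hσinj hρinj (Matrix.exists_mulVec_eq_zero_iff.mp ⟨z ∘ ρ, hzρ0, hkernel⟩)
end

section
/- Let q > 2 be a prime power. There is no invertible (q+1)×(q+1) matrix M over the finite field F_q such that every (q−1)×(q−1) submatrix of M (obtained by selecting any q−1 rows and any q−1 columns) is invertible; that is, there is no linear (q−1, q+1, q)-AONT. -/
/-! Let `N = M⁻¹`. By the vanishing case of Jacobi's complementary minor theorem, every 2×2 minor
of `N` is nonzero. Over `F_q` such a `(q+1)×(q+1)` matrix is singular. Two rows of `N` cannot both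
be free of zeros, since the ratios of their entries would be `q + 1` distinct elements of `F_q`; so
some `N i₀ j₀` vanishes, and it is the only zero in column `j₀`. Weighting each row `i ≠ i₀` by
`(N i j₀)⁻¹` kills every column: column `j₀` sums to `q = 0`, and in any other column `c` the
ratios `N i c / N i j₀` run through all of `F_q`, whose elements sum to `0` as `q > 2`. -/

open Function

namespace Matrix

variable {m n ι R : Type*}

def AllMinorsNeZero [CommRing R] (k : ℕ) (M : Matrix m n R) : Prop :=
  ∀ r : Fin k → m, ∀ c : Fin k → n, Injective r → Injective c → (M.submatrix r c).det ≠ 0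

theorem vecMul_submatrix_of_forall_notMem_range [NonUnitalNonAssocSemiring R] [Fintype m]
    [Fintype ι] {r : ι → m} (hr : Injective r) {v : m → R}
    (hv : ∀ x ∉ Set.range r, v x = 0) (M : Matrix m n R) (c : ι → n) :
    (v ∘ r) ᵥ* M.submatrix r c = (v ᵥ* M) ∘ c := by
  ext t
  exact Fintype.sum_of_injective r hr _ (fun x => v x * M x (c t))
    (fun x hx => by rw [hv x hx, zero_mul]) (fun _ => rfl)

theorem det_submatrix_eq_zero_of_vecMul [CommRing R] [IsDomain R] [Fintype m] [Fintype ι]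
    [DecidableEq ι] {M : Matrix m n R} {r : ι → m} {c : ι → n} (hr : Injective r) {v : m → R}
    (hv₀ : v ≠ 0) (hv : ∀ x ∉ Set.range r, v x = 0) (hvM : ∀ t, (v ᵥ* M) (c t) = 0) :
    (M.submatrix r c).det = 0 := by
  refine exists_vecMul_eq_zero_iff.mp ⟨v ∘ r, fun h => hv₀ ?_, ?_⟩
  · ext x
    by_cases hx : x ∈ Set.range r
    · obtain ⟨s, rfl⟩ := hx
      exact congrFun h s
    · exact hv x hx
  · rw [vecMul_submatrix_of_forall_notMem_range hr hv]
    exact funext hvM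

theorem _root_.Function.Injective.exists_injective_range_eq_compl [Fintype m] {k k' : ℕ}
    (hcard : Fintype.card m = k + k') {r : Fin k → m} (hr : Injective r) :
    ∃ e : Fin k' → m, Injective e ∧ Set.range e = (Set.range r)ᶜ := by
  classical
  set s := (Finset.univ.map ⟨r, hr⟩)ᶜ
  have hs : s.card = k' := by simp [s, Finset.card_compl, hcard]
  refine ⟨(↑) ∘ (s.equivFinOfCardEq hs).symm, Subtype.val_injective.comp (Equiv.injective _), ?_⟩
  rw [Set.range_comp, Equiv.range_eq_univ, Set.image_univ, Subtype.range_coe]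
  ext x
  simp [s]

theorem AllMinorsNeZero.inv [Field R] [Fintype n] [DecidableEq n] {M : Matrix n n R}
    (hM : M.det ≠ 0) {k k' : ℕ} (hcard : Fintype.card n = k + k') (h : M.AllMinorsNeZero k') :
    M⁻¹.AllMinorsNeZero k := by
  intro r c hr hc hdet
  obtain ⟨w, hw₀, hw⟩ := exists_vecMul_eq_zero_iff.mpr hdet
  -- `v = u M⁻¹` vanishes on the columns `c` because `w` kills `M⁻¹[r, c]`, while `v M = u`
  -- vanishes off the rows `r`: so `v`, restricted to the rows `r'`, kills `M[r', c']`.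
  set u : n → R := extend r w 0
  have hu : ∀ x ∉ Set.range r, u x = 0 := fun x hx => extend_apply' _ _ _ hx
  have hur : u ∘ r = w := funext (hr.extend_apply w 0)
  set v := u ᵥ* M⁻¹
  have hvM : v ᵥ* M = u := by
    rw [vecMul_vecMul, nonsing_inv_mul _ (Ne.isUnit hM), vecMul_one]
  obtain ⟨r', hr', hr'_range⟩ := hc.exists_injective_range_eq_compl hcard
  obtain ⟨c', hc', hc'_range⟩ := hr.exists_injective_range_eq_compl hcard
  refine h r' c' hr' hc' (det_submatrix_eq_zero_of_vecMul (v := v) hr' ?_ ?_ ?_)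
  · intro hv
    apply hw₀
    rw [← hur, ← hvM, hv, zero_vecMul, Pi.zero_comp]
  · intro x hx
    obtain ⟨t, rfl⟩ : x ∈ Set.range c := by simpa [hr'_range] using hx
    have hvc : v ∘ c = 0 := by rw [← vecMul_submatrix_of_forall_notMem_range hr hu, hur, hw]
    exact congrFun hvc t
  · intro t
    rw [hvM]
    exact hu _ (hc'_range.le ⟨t, rfl⟩)

namespace AllMinorsNeZero

theorem transpose [CommRing R] {k : ℕ} {N : Matrix m n R} (h : N.AllMinorsNeZero k) :
    Nᵀ.AllMinorsNeZero k := fun r c hr hc => by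
  rw [← transpose_submatrix, det_transpose]
  exact h c r hc hr

theorem mul_sub_mul_ne_zero [CommRing R] {N : Matrix m n R} (h : N.AllMinorsNeZero 2)
    {i k : m} {j l : n} (hik : i ≠ k) (hjl : j ≠ l) : N i j * N k l - N i l * N k j ≠ 0 := by
  have := h ![i, k] ![j, l] (injective_pair_iff_ne.mpr hik) (injective_pair_iff_ne.mpr hjl)
  rwa [det_fin_two] at this

section Field

variable {F : Type*} [Field F] {N : Matrix m n F} (h : N.AllMinorsNeZero 2)
include h

theorem injOn_div {j c : n} (hjc : j ≠ c) :
    Set.InjOn (fun i => N i c / N i j) {i | N i j ≠ 0} := by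
  intro i hi k hk hik
  by_contra hne
  apply h.mul_sub_mul_ne_zero hne hjc
  rw [div_eq_div_iff hi hk] at hik
  linear_combination -hik

theorem exists_eq_zero_of_card_lt [Fintype F] [Fintype n]
    (hcard : Fintype.card F < Fintype.card n) {i k : m} (hik : i ≠ k) : ∃ j, N i j = 0 := by
  by_contra! hi
  have hinj : Injective fun j => N k j / N i j := fun j l hjl =>
    h.transpose.injOn_div hik (hi j) (hi l) hjl
  exact (Fintype.card_le_of_injective _ hinj).not_gt hcard

theorem vecMul_inv_col_eq_zero [Fintype F] [Fintype m]
    (hcard : Fintype.card m = Fintype.card F + 1) (hF : 2 < Fintype.card F)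
    {i₀ : m} {j₀ : n} (hzero : N i₀ j₀ = 0)
    (hnz : ∀ i ≠ i₀, N i j₀ ≠ 0) : (fun i => (N i j₀)⁻¹) ᵥ* N = 0 := by
  classical
  ext c
  set s := Finset.univ.erase i₀
  have hs : s.card = Fintype.card F := by simp [s, Finset.card_erase_of_mem, hcard]
  -- the term at `i₀` vanishes because `0⁻¹ = 0`
  have hsum : ((fun i => (N i j₀)⁻¹) ᵥ* N) c = ∑ i ∈ s, N i c / N i j₀ := by
    rw [vecMul, dotProduct, ← Finset.add_sum_erase _ _ (Finset.mem_univ i₀)]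
    simp [hzero, div_eq_inv_mul, s]
  rw [hsum, Pi.zero_apply]
  rcases eq_or_ne c j₀ with rfl | hc
  · rw [Finset.sum_congr rfl fun i hi => div_self (hnz i (Finset.ne_of_mem_erase hi)),
      Finset.sum_const, hs, nsmul_one, FiniteField.cast_card_eq_zero]
  · have hinj : Set.InjOn (fun i => N i c / N i j₀) s := (h.injOn_div hc.symm).mono
      fun i hi => hnz i (Finset.ne_of_mem_erase hi)
    have himage : s.image (fun i => N i c / N i j₀) = Finset.univ :=
      Finset.eq_univ_of_card _ (by rw [Finset.card_image_of_injOn hinj, hs])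
    calc ∑ i ∈ s, N i c / N i j₀ = ∑ x ∈ s.image (fun i => N i c / N i j₀), x :=
          (Finset.sum_image (f := id) hinj).symm
      _ = ∑ x : F, x ^ 1 := by simp [himage]
      _ = 0 := FiniteField.sum_pow_lt_card_sub_one (K := F) 1 (by omega)

end Field

theorem det_eq_zero_of_card_eq_succ {F : Type*} [Field F] [Fintype F] [Fintype m] [DecidableEq m]
    {N : Matrix m m F} (h : N.AllMinorsNeZero 2) (hcard : Fintype.card m = Fintype.card F + 1)
    (hF : 2 < Fintype.card F) : N.det = 0 := by
  obtain ⟨i₀, k, hk⟩ := Fintype.exists_pair_of_one_lt_card (α := m) (by omega)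
  obtain ⟨j₀, hzero⟩ := h.exists_eq_zero_of_card_lt (by omega) hk
  obtain ⟨l, hl⟩ := Fintype.exists_ne_of_one_lt_card (α := m) (by omega) j₀
  have hnz : ∀ i ≠ i₀, N i j₀ ≠ 0 := fun i hi hij =>
    h.mul_sub_mul_ne_zero hi hl.symm (by simp [hij, hzero])
  refine exists_vecMul_eq_zero_iff.mp
    ⟨_, fun hv => ?_, h.vecMul_inv_col_eq_zero hcard hF hzero hnz⟩
  exact hnz k hk.symm (inv_eq_zero.mp (congrFun hv k))

end AllMinorsNeZero

end Matrix

theorem no_linear_q_sub_one_q_add_one_q_AONT_general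
    (q : ℕ) (hq2 : 2 < q)
    (F : Type*) [Field F] [Fintype F] (hF : Fintype.card F = q) :
    ¬ ∃ M : Matrix (Fin (q + 1)) (Fin (q + 1)) F,
        M.det ≠ 0 ∧
        ∀ r c : Fin (q - 1) → Fin (q + 1),
          Function.Injective r → Function.Injective c →
          (M.submatrix r c).det ≠ 0 := by
  rintro ⟨M, hM, hminors⟩
  have hinv : M⁻¹.AllMinorsNeZero 2 := Matrix.AllMinorsNeZero.inv hM (by simp; omega) hminors
  exact (M.isUnit_nonsing_inv_det hM.isUnit).ne_zero
    (hinv.det_eq_zero_of_card_eq_succ (by simp [hF]) (by omega))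

/-- For any prime power q > 2 there is no linear (q−1,q+1,q)-AONT: no invertible
(q+1)×(q+1) matrix over F_q all of whose (q−1)×(q−1) submatrices are invertible. -/
theorem no_linear_q_sub_one_q_add_one_q_AONT
    (q : ℕ) (hq : IsPrimePow q) (hq2 : 2 < q)
    (F : Type*) [Field F] [Fintype F] (hF : Fintype.card F = q) :
    ¬ ∃ M : Matrix (Fin (q + 1)) (Fin (q + 1)) F,
        M.det ≠ 0 ∧
        ∀ r c : Fin (q - 1) → Fin (q + 1),
          Function.Injective r → Function.Injective c →
          (M.submatrix r c).det ≠ 0 :=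
  no_linear_q_sub_one_q_add_one_q_AONT_general q hq2 F hF
end

section
/- Let q = p^r be a prime power with Φ(q) = p^r − p^{r−1} ≥ 2. Then there exists an invertible Φ(q)×Φ(q) matrix M over the finite field F_q such that every (Φ(q)−2)×(Φ(q)−2) submatrix of M (obtained by selecting any Φ(q)−2 rows and any Φ(q)−2 columns) is invertible; that is, a linear (Φ(q)−2, Φ(q), q)-AONT exists over F_q. -/
/-!
Write `q = p ^ r` and `s = Φ(q)`. In `F_q` one has `z⁻¹ = z ^ (q - 2)` (also at `z = 0` once
`q > 2`) and `C(q - 2, k) ≡ (-1) ^ k (k + 1) (mod p)`, so the kernel `(x + y)⁻¹` is a sum of exactly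
`s` separated terms `x ^ k y ^ (q - 2 - k)`, those with `p ∤ k + 1`. These monomials are linearly
independent functions on `F_q`, hence some choice of points makes `N = ((x_i + y_j)⁻¹)` an
invertible `s × s` matrix. All `2 × 2` minors of `N` are nonzero, because
`(x₁ + y₁)(x₂ + y₂) - (x₁ + y₂)(x₂ + y₁) = -(x₁ - x₂)(y₁ - y₂)`, and a singular `(s - 2) × (s - 2)`
submatrix of `N⁻¹` would force the complementary `2 × 2` submatrix of `N` to be singular. So
`M = N⁻¹` works.
-/

open Finset Function

theorem exists_injective_range_eq_compl {n : Type*} [Fintype n] {k t : ℕ}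
    (h : t + k = Fintype.card n) {r : Fin k → n} (hr : Injective r) :
    ∃ r' : Fin t → n, Injective r' ∧ Set.range r' = (Set.range r)ᶜ := by
  classical
  have hcard : Fintype.card ((Set.range r)ᶜ : Set n) = t := by
    rw [Fintype.card_compl_set, Set.card_range_of_injective hr, Fintype.card_fin]
    omega
  let e := (Fintype.equivFinOfCardEq hcard).symm
  refine ⟨Subtype.val ∘ e, Subtype.val_injective.comp e.injective, ?_⟩
  rw [Set.range_comp, e.range_eq_univ, Set.image_univ, Subtype.range_coe]

namespace Matrix

variable {K : Type*} [Field K]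

/-- `M.IsLinearAONT t` says that `M` is a linear `(t, s, q)`-AONT, where `s = |n|` and `q = |K|`. -/
def IsLinearAONT {n : Type*} [Fintype n] [DecidableEq n] (t : ℕ) (M : Matrix n n K) : Prop :=
  M.det ≠ 0 ∧ ∀ r c : Fin t → n, Injective r → Injective c → (M.submatrix r c).det ≠ 0

theorem IsLinearAONT.reindex {m n : Type*} [Fintype m] [DecidableEq m] [Fintype n] [DecidableEq n]
    {t : ℕ} {M : Matrix m m K} (hM : M.IsLinearAONT t) (e : m ≃ n) :
    (reindex e e M).IsLinearAONT t := by
  refine ⟨by rw [det_reindex_self]; exact hM.1, fun r c hr hc => ?_⟩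
  rw [reindex_apply, submatrix_submatrix]
  exact hM.2 _ _ (e.symm.injective.comp hr) (e.symm.injective.comp hc)

theorem submatrix_mulVec_comp_apply {m n ι κ : Type*} [Fintype n] [Fintype κ] (A : Matrix m n K)
    (r : ι → m) {c : κ → n} (hc : Injective c) {v : n → K} (hv : ∀ j ∉ Set.range c, v j = 0)
    (i : ι) : (A.submatrix r c *ᵥ (v ∘ c)) i = (A *ᵥ v) (r i) :=
  Fintype.sum_of_injective c hc _ _ (fun j hj => by simp [hv j hj]) fun _ => rfl

theorem det_submatrix_eq_zero_iff {m n ι : Type*} [Fintype n] [Fintype ι] [DecidableEq ι]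
    (A : Matrix m n K) (r : ι → m) {c : ι → n} (hc : Injective c) :
    (A.submatrix r c).det = 0 ↔
      ∃ v ≠ 0, (∀ j ∉ Set.range c, v j = 0) ∧ ∀ i, (A *ᵥ v) (r i) = 0 := by
  rw [← exists_mulVec_eq_zero_iff]
  constructor
  · rintro ⟨u, hu, hAu⟩
    have hvc : ∀ j ∉ Set.range c, extend c u 0 j = 0 := fun j hj => extend_apply' _ _ _ hj
    refine ⟨extend c u 0, fun h => hu ?_, hvc, fun i => ?_⟩
    · rw [← extend_comp hc u 0, h]; rfl
    · rw [← submatrix_mulVec_comp_apply A r hc hvc, extend_comp hc, hAu]; rfl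
  · rintro ⟨v, hv, hvc, hAv⟩
    refine ⟨v ∘ c, fun h => hv (funext fun j => ?_), funext fun i => ?_⟩
    · by_cases hj : j ∈ Set.range c
      · obtain ⟨j, rfl⟩ := hj
        exact congrFun h j
      · exact hvc j hj
    · rw [submatrix_mulVec_comp_apply A r hc hvc, hAv]; rfl

theorem IsLinearAONT.inv {n : Type*} [Fintype n] [DecidableEq n] {t k : ℕ} {N : Matrix n n K}
    (hN : N.IsLinearAONT t) (h : t + k = Fintype.card n) : N⁻¹.IsLinearAONT k := by
  have hunit : IsUnit N.det := isUnit_iff_ne_zero.2 hN.1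
  refine ⟨(isUnit_nonsing_inv_det N hunit).ne_zero, fun r c hr hc hdet => ?_⟩
  obtain ⟨v, hv, hvc, hvr⟩ := (det_submatrix_eq_zero_iff _ r hc).1 hdet
  obtain ⟨r', hr', hr'_range⟩ := exists_injective_range_eq_compl h hr
  obtain ⟨c', hc', hc'_range⟩ := exists_injective_range_eq_compl h hc
  have hNv : N *ᵥ (N⁻¹ *ᵥ v) = v := by rw [mulVec_mulVec, mul_nonsing_inv N hunit, one_mulVec]
  refine hN.2 c' r' hc' hr' ((det_submatrix_eq_zero_iff N c' hr').2 ⟨N⁻¹ *ᵥ v, ?_, ?_, ?_⟩)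
  · intro h0
    rw [h0, mulVec_zero] at hNv
    exact hv hNv.symm
  · intro j hj
    rw [hr'_range, Set.notMem_compl_iff] at hj
    obtain ⟨i, rfl⟩ := hj
    exact hvr i
  · intro i
    rw [hNv]
    exact hvc _ (by rw [← Set.mem_compl_iff, ← hc'_range]; exact Set.mem_range_self i)

theorem inv_add_mul_inv_add_ne {x₁ x₂ y₁ y₂ : K} (hx : x₁ ≠ x₂) (hy : y₁ ≠ y₂) :
    (x₁ + y₁)⁻¹ * (x₂ + y₂)⁻¹ ≠ (x₁ + y₂)⁻¹ * (x₂ + y₁)⁻¹ := by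
  rw [← _root_.mul_inv, ← _root_.mul_inv, Ne, _root_.inv_inj]
  intro h
  exact mul_ne_zero (sub_ne_zero.2 hx) (sub_ne_zero.2 hy) (by linear_combination -h)

theorem isLinearAONT_two_of_det_ne_zero {ι : Type*} [Fintype ι] [DecidableEq ι] {x y : ι → K}
    (hN : (of fun i j => (x i + y j)⁻¹).det ≠ 0) :
    (of fun i j => (x i + y j)⁻¹).IsLinearAONT 2 := by
  have hx : Injective x := fun a b hab =>
    by_contra fun hne => hN (det_zero_of_row_eq hne (by ext j; simp [hab]))
  have hy : Injective y := fun a b hab =>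
    by_contra fun hne => hN (det_zero_of_column_eq hne fun i => by simp [hab])
  refine ⟨hN, fun r c hr hc => ?_⟩
  rw [det_fin_two]
  exact sub_ne_zero.2 <| inv_add_mul_inv_add_ne (hx.ne (hr.ne Fin.zero_ne_one))
    (hy.ne (hc.ne Fin.zero_ne_one))

theorem exists_det_submatrix_ne_zero_of_linearIndependent {ι X : Type*} [Fintype ι]
    [DecidableEq ι] [Fintype X] (A : Matrix ι X K) (hA : LinearIndependent K A.row) :
    ∃ t : ι → X, (A.submatrix id t).det ≠ 0 := by
  obtain ⟨κ, a, -, hspan, hli⟩ := exists_linearIndependent' K A.col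
  have : Fintype κ := @Fintype.ofFinite κ hli.finite
  have hcard : Fintype.card ι = Fintype.card κ := by
    rw [linearIndependent_iff_card_eq_finrank_span.1 hli, Set.finrank, hspan,
      ← rank_eq_finrank_span_cols, hA.rank_matrix]
  let e := Fintype.equivOfCardEq hcard
  refine ⟨a ∘ e, fun h => ?_⟩
  have hcols : LinearIndependent K (A.submatrix id (a ∘ e)).col := hli.comp e e.injective
  exact ((isUnit_iff_isUnit_det _).1 (linearIndependent_cols_iff_isUnit.1 hcols)).ne_zero h

theorem exists_det_ne_zero_of_eq_sum_mul {ι X Y : Type*} [Fintype ι] [DecidableEq ι] [Fintype X]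
    [Fintype Y] {f : X → Y → K} {g : ι → X → K} {h : ι → Y → K} (hg : LinearIndependent K g)
    (hh : LinearIndependent K h) (hf : ∀ x y, f x y = ∑ i, g i x * h i y) :
    ∃ (x : ι → X) (y : ι → Y), (of fun i j => f (x i) (y j)).det ≠ 0 := by
  obtain ⟨x, hx⟩ := exists_det_submatrix_ne_zero_of_linearIndependent (of g) hg
  obtain ⟨y, hy⟩ := exists_det_submatrix_ne_zero_of_linearIndependent (of h) hh
  have hfactor :
      (of fun i j => f (x i) (y j)) = ((of g).submatrix id x)ᵀ * (of h).submatrix id y := by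
    ext i j
    simp [mul_apply, hf]
  refine ⟨x, y, ?_⟩
  rw [hfactor, det_mul, det_transpose]
  exact mul_ne_zero hx hy

end Matrix

theorem FiniteField.charP_of_card_eq_prime_pow {F : Type*} [Field F] [Fintype F] {p r : ℕ}
    (hp : p.Prime) (hF : Fintype.card F = p ^ r) : CharP F p := by
  have hchar := CharP.char_is_prime F (ringChar F)
  have hdvd : ringChar F ∣ p ^ r := by
    rw [← hF, ← ringChar.spec]
    exact FiniteField.cast_card_eq_zero F
  exact ringChar.of_eq ((Nat.prime_dvd_prime_iff_eq hchar hp).1 (hchar.dvd_of_dvd_pow hdvd))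

theorem FiniteField.inv_eq_pow_card_sub_two {F : Type*} [Field F] [Fintype F]
    (h : 2 < Fintype.card F) (z : F) : z⁻¹ = z ^ (Fintype.card F - 2) := by
  rcases eq_or_ne z 0 with rfl | hz
  · rw [inv_zero, zero_pow (by omega)]
  · refine (eq_inv_of_mul_eq_one_left ?_).symm
    rw [← pow_succ, show Fintype.card F - 2 + 1 = Fintype.card F - 1 by omega,
      FiniteField.pow_card_sub_one_eq_one z hz]

open Polynomial in
theorem FiniteField.linearIndependent_fun_pow {F ι : Type*} [Field F] [Fintype F] [Fintype ι]
    {e : ι → ℕ} (he : Injective e) (hlt : ∀ i, e i < Fintype.card F) :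
    LinearIndependent F fun i (x : F) => x ^ e i := by
  classical
  rw [Fintype.linearIndependent_iff]
  intro c hc i
  set P : F[X] := ∑ j, C (c j) * X ^ e j
  have hdeg : P.degree < (univ : Finset F).card := mem_degreeLT.1 <| Submodule.sum_mem _
    fun j _ => mem_degreeLT.2 ((degree_C_mul_X_pow_le _ _).trans_lt (by exact_mod_cast hlt j))
  have hP : P = 0 := eq_zero_of_degree_lt_of_eval_finset_eq_zero _ hdeg fun x _ => by
    simpa [P, eval_finsetSum] using congrFun hc x
  simpa [P, finsetSum_coeff, coeff_C_mul_X_pow, he.eq_iff] using congrArg (coeff · (e i)) hP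

theorem cast_choose_prime_pow_sub_one {R : Type*} [CommRing R] {p : ℕ} [CharP R p]
    (hp : p.Prime) (r : ℕ) {j : ℕ} (hj : j < p ^ r) :
    (((p ^ r - 1).choose j : ℕ) : R) = (-1) ^ j := by
  induction j with
  | zero => simp
  | succ j ih =>
    have hpascal : (p ^ r).choose (j + 1) = (p ^ r - 1).choose j + (p ^ r - 1).choose (j + 1) := by
      conv_lhs => rw [← Nat.sub_add_cancel (Nat.one_le_pow r p hp.pos)]
      exact Nat.choose_succ_succ _ _
    have hdvd : (((p ^ r).choose (j + 1) : ℕ) : R) = 0 :=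
      (CharP.cast_eq_zero_iff R p _).2 (hp.dvd_choose_pow j.succ_ne_zero hj.ne)
    rw [hpascal, Nat.cast_add, ih (by omega)] at hdvd
    linear_combination hdvd

theorem cast_choose_prime_pow_sub_two {R : Type*} [CommRing R] {p r : ℕ} [CharP R p]
    (hp : p.Prime) (hr : 0 < r) {k : ℕ} (hk : k + 2 ≤ p ^ r) :
    (((p ^ r - 2).choose k : ℕ) : R) = (-1) ^ k * (k + 1) := by
  have hq : ((p ^ r : ℕ) : R) = 0 := (CharP.cast_eq_zero_iff R p _).2 (dvd_pow_self p hr.ne')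
  have h := congrArg (Nat.cast : ℕ → R) (Nat.add_one_mul_choose_eq (p ^ r - 2) k)
  rw [show p ^ r - 2 + 1 = p ^ r - 1 by omega, Nat.cast_mul, Nat.cast_mul,
    Nat.cast_sub (by omega), hq, cast_choose_prime_pow_sub_one hp r (by omega)] at h
  push_cast at h
  linear_combination -h

/-- The exponents `k` whose coefficient `C(q - 2, k)` in `(x + y) ^ (q - 2)` is nonzero mod `p`. -/
def invExponents (p q : ℕ) : Finset ℕ := {k ∈ range (q - 1) | ¬ p ∣ k + 1}

theorem card_invExponents {p r : ℕ} (hp : p.Prime) (hr : 0 < r) :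
    #(invExponents p (p ^ r)) = p ^ r - p ^ (r - 1) := by
  have hsplit := card_filter_add_card_filter_not (s := range (p ^ r - 1)) (fun k => p ∣ k + 1)
  have hdiv : (p ^ r - 1) / p = p ^ (r - 1) - 1 := by
    obtain ⟨n, rfl⟩ := Nat.exists_eq_add_of_lt hr
    have hpos : 0 < p ^ n := pow_pos hp.pos n
    rw [zero_add, Nat.add_sub_cancel, pow_succ]
    apply Nat.div_eq_of_lt_le
    · rw [Nat.sub_one_mul]; have := hp.pos; omega
    · rw [Nat.sub_add_cancel hpos]; have := Nat.mul_pos hpos hp.pos; omega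
  rw [Nat.card_multiples, card_range, hdiv] at hsplit
  have := Nat.one_le_pow (r - 1) p hp.pos
  have := Nat.pow_le_pow_right hp.pos (Nat.sub_le r 1)
  unfold invExponents
  omega

theorem inv_add_eq_sum_invExponents {F : Type*} [Field F] [Fintype F] {p r : ℕ} [CharP F p]
    (hp : p.Prime) (hF : Fintype.card F = p ^ r) (hq : 2 < p ^ r) (x y : F) :
    (x + y)⁻¹ = ∑ k ∈ invExponents p (p ^ r), (-1) ^ k * (k + 1) * x ^ k * y ^ (p ^ r - 2 - k) := by
  have hr : 0 < r := Nat.pos_of_ne_zero (by rintro rfl; simp at hq)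
  rw [FiniteField.inv_eq_pow_card_sub_two (hF ▸ hq), hF, add_pow,
    show p ^ r - 2 + 1 = p ^ r - 1 by omega, invExponents, sum_filter_of_ne]
  · refine sum_congr rfl fun k hk => ?_
    rw [cast_choose_prime_pow_sub_two hp hr (by rw [mem_range] at hk; omega)]
    ring
  · intro k _ hne hdvd
    apply hne
    rw [show (k : F) + 1 = ((k + 1 : ℕ) : F) by push_cast; rfl,
      (CharP.cast_eq_zero_iff F p _).2 hdvd]
    ring

theorem exists_det_inv_add_ne_zero {F : Type*} [Field F] [Fintype F] {p r : ℕ} [CharP F p]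
    (hp : p.Prime) (hF : Fintype.card F = p ^ r) (hq : 2 < p ^ r) :
    ∃ x y : invExponents p (p ^ r) → F, (Matrix.of fun i j => (x i + y j)⁻¹).det ≠ 0 := by
  have hmem (k : invExponents p (p ^ r)) : (k : ℕ) + 2 ≤ p ^ r ∧ ¬ p ∣ k + 1 := by
    have := k.2
    simp only [invExponents, mem_filter, mem_range] at this
    omega
  have hcoeff (k : invExponents p (p ^ r)) : (-1 : F) ^ (k : ℕ) * ((k : ℕ) + 1) ≠ 0 := by
    refine mul_ne_zero (pow_ne_zero _ (neg_ne_zero.2 one_ne_zero)) ?_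
    exact_mod_cast (CharP.cast_eq_zero_iff F p _).not.2 (hmem k).2
  refine Matrix.exists_det_ne_zero_of_eq_sum_mul (f := fun x y : F => (x + y)⁻¹)
    (g := fun (k : invExponents p (p ^ r)) (x : F) => (-1) ^ (k : ℕ) * ((k : ℕ) + 1) * x ^ (k : ℕ))
    (h := fun k (y : F) => y ^ (p ^ r - 2 - k)) ?_ ?_ fun x y => ?_
  · have := (FiniteField.linearIndependent_fun_pow Subtype.val_injective
      fun k => by rw [hF]; have := hmem k; omega).units_smul fun k => Units.mk0 _ (hcoeff k)
    convert this using 1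
    ext k x
    rfl
  · refine FiniteField.linearIndependent_fun_pow (fun k l hkl => ?_) fun k => ?_
    · have := hmem k; have := hmem l
      exact Subtype.ext (by omega)
    · rw [hF]
      omega
  · rw [inv_add_eq_sum_invExponents hp hF hq, ← sum_coe_sort]

theorem exists_linear_totient_sub_two_totient_q_AONT_general
    (p r : ℕ) (hp : p.Prime) (hΦ : 2 ≤ p ^ r - p ^ (r - 1))
    (F : Type*) [Field F] [Fintype F] (hF : Fintype.card F = p ^ r) :
    ∃ M : Matrix (Fin (p ^ r - p ^ (r - 1))) (Fin (p ^ r - p ^ (r - 1))) F,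
      M.det ≠ 0 ∧
      ∀ r' c : Fin (p ^ r - p ^ (r - 1) - 2) → Fin (p ^ r - p ^ (r - 1)),
        Function.Injective r' → Function.Injective c →
        (M.submatrix r' c).det ≠ 0 := by
  have hr : 0 < r := Nat.pos_of_ne_zero (by rintro rfl; simp at hΦ)
  have hq : 2 < p ^ r := by have := Nat.one_le_pow (r - 1) p hp.pos; omega
  have := FiniteField.charP_of_card_eq_prime_pow hp hF
  obtain ⟨x, y, hN⟩ := exists_det_inv_add_ne_zero hp hF hq
  have hcard : Fintype.card (invExponents p (p ^ r)) = p ^ r - p ^ (r - 1) := by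
    rw [Fintype.card_coe, card_invExponents hp hr]
  have hN₂ := (Matrix.isLinearAONT_two_of_det_ne_zero hN).reindex (Fintype.equivFinOfCardEq hcard)
  exact ⟨_, hN₂.inv (by rw [Fintype.card_fin]; omega)⟩

/-- For every prime power q = p^r with Φ(q) = p^r − p^{r−1} ≥ 2 there exists a linear
(Φ(q)−2,Φ(q),q)-AONT over F_q: an invertible Φ(q)×Φ(q) matrix all of whose
(Φ(q)−2)×(Φ(q)−2) submatrices are invertible. -/
theorem exists_linear_totient_sub_two_totient_q_AONT
    (p r : ℕ) (hp : p.Prime) (hr : 0 < r) (hΦ : 2 ≤ p ^ r - p ^ (r - 1))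
    (F : Type*) [Field F] [Fintype F] (hF : Fintype.card F = p ^ r) :
    ∃ M : Matrix (Fin (p ^ r - p ^ (r - 1))) (Fin (p ^ r - p ^ (r - 1))) F,
      M.det ≠ 0 ∧
      ∀ r' c : Fin (p ^ r - p ^ (r - 1) - 2) → Fin (p ^ r - p ^ (r - 1)),
        Function.Injective r' → Function.Injective c →
        (M.submatrix r' c).det ≠ 0 :=
  exists_linear_totient_sub_two_totient_q_AONT_general p r hp hΦ F hF
end

section
/- Suppose q = 2^n and q − 1 is prime (a Mersenne prime). Then there exists an invertible (q−1)×(q−1) matrix M over the finite field F_q such that every (q−3)×(q−3) submatrix of M (obtained by selecting any q−3 rows and any q−3 columns) is invertible; that is, a linear (q−3, q−1, q)-AONT exists over F_q. -/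
/-- If q = 2^n and q − 1 is a (Mersenne) prime, then there exists a linear
(q−3,q−1,q)-AONT over F_q: an invertible (q−1)×(q−1) matrix all of whose
(q−3)×(q−3) submatrices are invertible. -/
theorem exists_linear_q_sub_three_q_sub_one_q_AONT
    (n q : ℕ) (hq : q = 2 ^ n) (hp : (q - 1).Prime)
    (F : Type*) [Field F] [Fintype F] (hF : Fintype.card F = q) :
    ∃ M : Matrix (Fin (q - 1)) (Fin (q - 1)) F,
      M.det ≠ 0 ∧
      ∀ r c : Fin (q - 3) → Fin (q - 1),
        Function.Injective r → Function.Injective c →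
        (M.submatrix r c).det ≠ 0 := by
  classical
  set p := q - 1 with hpq
  haveI : Fact p.Prime := ⟨hp⟩
  -- a generator of the (cyclic) unit group of F
  obtain ⟨ζ, hζ⟩ := IsCyclic.exists_generator (α := Fˣ)
  have hord : orderOf ζ = p := by
    rw [orderOf_eq_card_of_forall_mem_zpowers hζ, Nat.card_eq_fintype_card, Fintype.card_units, hF]
  -- powers of ζ with exponents < p are distinct
  have hpow : ∀ i j : ℕ, i < p → j < p → ζ ^ i = ζ ^ j → i = j := by
    intro i j hi hj h
    have := pow_eq_pow_iff_modEq.mp h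
    rw [hord] at this
    exact Nat.ModEq.eq_of_lt_of_lt this hi hj
  -- the 2×2 minors condition, using primality of p
  have hminor : ∀ a b x y : Fin p, a ≠ b → x ≠ y →
      (ζ ^ (x.val * a.val) * ζ ^ (y.val * b.val) : Fˣ) ≠
        ζ ^ (x.val * b.val) * ζ ^ (y.val * a.val) := by
    intro a b x y hab hxy h
    rw [← pow_add, ← pow_add] at h
    have hm : x.val * a.val + y.val * b.val ≡ x.val * b.val + y.val * a.val [MOD p] := by
      rwa [pow_eq_pow_iff_modEq, hord] at h
    have hz : ((x.val : ZMod p) - y.val) * ((a.val : ZMod p) - b.val) = 0 := by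
      have hcast := (ZMod.natCast_eq_natCast_iff _ _ _).mpr hm
      push_cast at hcast
      linear_combination hcast
    have hcastinj : ∀ s t : Fin p, (s.val : ZMod p) = (t.val : ZMod p) → s = t := by
      intro s t hst
      have hs := ZMod.val_cast_of_lt s.isLt
      have ht := ZMod.val_cast_of_lt t.isLt
      exact Fin.ext (by rw [← hs, ← ht, hst])
    rcases mul_eq_zero.mp hz with h0 | h0
    · exact hxy (hcastinj _ _ (sub_eq_zero.mp h0))
    · exact hab (hcastinj _ _ (sub_eq_zero.mp h0))
  -- the Vandermonde-type matrix N
  set N : Matrix (Fin p) (Fin p) F := fun i j => ((ζ ^ (i.val * j.val) : Fˣ) : F) with hN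
  have hNdet : N.det ≠ 0 := by
    have hNv : N = Matrix.vandermonde (fun i : Fin p => ((ζ : F) ^ i.val)) := by
      ext i j
      simp [hN, Matrix.vandermonde, ← pow_mul]
    rw [hNv, Matrix.det_vandermonde]
    rw [Finset.prod_ne_zero_iff]
    intro i _
    rw [Finset.prod_ne_zero_iff]
    intro j hj
    rw [Finset.mem_Ioi] at hj
    rw [sub_ne_zero]
    intro hEq
    have : ζ ^ (j.val : ℕ) = ζ ^ (i.val : ℕ) := by
      apply Units.ext
      push_cast
      exact hEq
    exact absurd (Fin.ext (hpow _ _ j.isLt i.isLt this)) (ne_of_gt hj)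
  have hNdetU : IsUnit N.det := isUnit_iff_ne_zero.mpr hNdet
  refine ⟨N⁻¹, ?_, ?_⟩
  · rw [Matrix.det_nonsing_inv, Ring.inverse_eq_inv']
    exact inv_ne_zero hNdet
  intro r c hr hc hdet0
  -- suppose the submatrix were singular; get a nonzero kernel vector
  obtain ⟨v, hv, hvz⟩ := (Matrix.exists_mulVec_eq_zero_iff).mpr hdet0
  -- extend v by zero along c
  set V : Fin p → F := fun j => ∑ k, if c k = j then v k else 0 with hV
  set u : Fin p → F := N⁻¹.mulVec V with hu
  have hNu : N.mulVec u = V := by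
    rw [hu, Matrix.mulVec_mulVec, Matrix.mul_nonsing_inv _ hNdetU, Matrix.one_mulVec]
  -- u vanishes on the range of r
  have hu_r : ∀ i, u (r i) = 0 := by
    intro i
    have hcalc : u (r i) = ((N⁻¹.submatrix r c).mulVec v) i := by
      rw [hu]
      simp only [Matrix.mulVec, dotProduct, Matrix.submatrix_apply, hV,
        Finset.mul_sum, mul_ite, mul_zero]
      rw [Finset.sum_comm]
      congr 1
      ext k
      rw [Finset.sum_ite_eq Finset.univ (c k) (fun j => N⁻¹ (r i) j * v k)]
      simp
    rw [hcalc, hvz, Pi.zero_apply]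
  -- the complement of range r has two elements a ≠ b
  have hq3 : q - 3 + 2 = p ∨ q - 3 = 0 ∧ p = 2 := by
    have := hp.two_le
    omega
  have hcards : p - (q - 3) = 2 := by
    have := hp.two_le
    omega
  obtain ⟨a, b, hab, hAB⟩ : ∃ a b : Fin p, a ≠ b ∧ (Finset.univ.image r)ᶜ = {a, b} := by
    apply Finset.card_eq_two.mp
    rw [Finset.card_compl, Finset.card_image_of_injective _ hr]
    simp only [Finset.card_univ, Fintype.card_fin]
    omega
  obtain ⟨x, y, hxy, hXY⟩ : ∃ x y : Fin p, x ≠ y ∧ (Finset.univ.image c)ᶜ = {x, y} := by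
    apply Finset.card_eq_two.mp
    rw [Finset.card_compl, Finset.card_image_of_injective _ hc]
    simp only [Finset.card_univ, Fintype.card_fin]
    omega
  -- u is supported on {a, b}
  have hu_supp : ∀ j : Fin p, j ≠ a → j ≠ b → u j = 0 := by
    intro j hja hjb
    have hj : j ∈ (Finset.univ.image r) := by
      by_contra hmem
      have : j ∈ ({a, b} : Finset (Fin p)) := by
        rw [← hAB, Finset.mem_compl]; exact hmem
      simp only [Finset.mem_insert, Finset.mem_singleton] at this
      tauto
    obtain ⟨i, _, rfl⟩ := Finset.mem_image.mp hj
    exact hu_r i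
  -- hence V z = N z a * u a + N z b * u b for all z
  have hmv : ∀ z : Fin p, V z = N z a * u a + N z b * u b := by
    intro z
    have h1 : (N.mulVec u) z = V z := congrFun hNu z
    rw [← h1]
    simp only [Matrix.mulVec, dotProduct]
    rw [← Finset.sum_subset (Finset.subset_univ ({a, b} : Finset (Fin p)))]
    · rw [Finset.sum_pair hab]
    · intro j _ hj
      simp only [Finset.mem_insert, Finset.mem_singleton] at hj
      push_neg at hj
      rw [hu_supp j hj.1 hj.2, mul_zero]
  -- V vanishes at x and y
  have hVzero : ∀ z : Fin p, z ∉ Finset.univ.image c → V z = 0 := by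
    intro z hz
    rw [hV]
    apply Finset.sum_eq_zero
    intro k _
    have : c k ≠ z := by
      intro hck
      exact hz (Finset.mem_image.mpr ⟨k, Finset.mem_univ k, hck⟩)
    simp [this]
  have hVx : V x = 0 := hVzero x (by rw [← Finset.mem_compl, hXY]; simp)
  have hVy : V y = 0 := hVzero y (by rw [← Finset.mem_compl, hXY]; simp)
  have E1 : N x a * u a + N x b * u b = 0 := by rw [← hmv x, hVx]
  have E2 : N y a * u a + N y b * u b = 0 := by rw [← hmv y, hVy]
  -- the 2×2 determinant is nonzero
  have hD : N x a * N y b - N x b * N y a ≠ 0 := by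
    rw [sub_ne_zero, hN]
    simp only [← Units.val_mul]
    intro hEq
    exact hminor a b x y hab hxy (Units.ext hEq)
  have hua : u a = 0 := by
    have h0 : u a * (N x a * N y b - N x b * N y a) = 0 := by
      linear_combination N y b * E1 - N x b * E2
    exact (mul_eq_zero.mp h0).resolve_right hD
  have hub : u b = 0 := by
    have h0 : u b * (N x a * N y b - N x b * N y a) = 0 := by
      linear_combination N x a * E2 - N y a * E1
    exact (mul_eq_zero.mp h0).resolve_right hD
  -- so V = 0, hence v = 0, contradiction
  have hVall : ∀ z : Fin p, V z = 0 := by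
    intro z
    rw [hmv z, hua, hub, mul_zero, mul_zero, add_zero]
  apply hv
  funext k
  have : V (c k) = v k := by
    rw [hV]
    simp only [hc.eq_iff]
    rw [Finset.sum_ite_eq' Finset.univ k v]
    simp
  rw [Pi.zero_apply, ← this, hVall]
end

section
/- Let X and Y be finite sets with |X| = n and |Y| = m, let 0 ≤ t ≤ s, and suppose there exist a (t,s,n)-AONT φ : X^s → X^s and a (t,s,m)-AONT ψ : Y^s → Y^s. Then there exists a (t,s,nm)-AONT on the set X × Y of size nm; in particular, the map (X×Y)^s → (X×Y)^s acting as φ on the X-coordinates and ψ on the Y-coordinates is a (t,s,nm)-AONT. -/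
/-- Product construction: from a (t,s,n)-AONT on X and a (t,s,m)-AONT on Y one obtains
a (t,s,nm)-AONT on X × Y, by acting as φ on the X-coordinates and ψ on the
Y-coordinates. -/
theorem product_of_AONTs_is_AONT
    (X Y : Type*) [Fintype X] [Fintype Y] (n m t s : ℕ)
    (hX : Fintype.card X = n) (hY : Fintype.card Y = m) (ht : t ≤ s)
    (φ : (Fin s → X) → (Fin s → X)) (ψ : (Fin s → Y) → (Fin s → Y))
    (hφ : IsAONT t φ) (hψ : IsAONT t ψ) :
    IsAONT t (fun z : Fin s → X × Y => fun i =>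
      (φ (fun k => (z k).1) i, ψ (fun k => (z k).2) i)) := by
  obtain ⟨hφb, hφ2⟩ := hφ
  obtain ⟨hψb, hψ2⟩ := hψ
  constructor
  · constructor
    · intro z z' h
      have h1 : φ (fun k => (z k).1) = φ (fun k => (z' k).1) := by
        funext i; exact congrArg Prod.fst (congrFun h i)
      have h2 : ψ (fun k => (z k).2) = ψ (fun k => (z' k).2) := by
        funext i; exact congrArg Prod.snd (congrFun h i)
      have e1 := hφb.1 h1
      have e2 := hψb.1 h2
      funext k
      exact Prod.ext (congrFun e1 k) (congrFun e2 k)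
    · intro w
      obtain ⟨x, hx⟩ := hφb.2 (fun k => (w k).1)
      obtain ⟨y, hy⟩ := hψb.2 (fun k => (w k).2)
      refine ⟨fun k => (x k, y k), ?_⟩
      funext i
      exact Prod.ext (congrFun hx i) (congrFun hy i)
  · intro I J hI hJ
    have hX2 := hφ2 I J hI hJ
    have hY2 := hψ2 I J hI hJ
    constructor
    · intro z z' h
      have h1 := congrArg Prod.fst h
      have h2 := congrArg Prod.snd h
      simp only at h1 h2
      have eX' : (fun k => (z k).1) = fun k => (z' k).1 :=
        hX2.1 (Prod.ext
          (funext fun i => congrArg Prod.fst (congrFun h1 i))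
          (funext fun j => congrArg Prod.fst (congrFun h2 j)))
      have eY' : (fun k => (z k).2) = fun k => (z' k).2 :=
        hY2.1 (Prod.ext
          (funext fun i => congrArg Prod.snd (congrFun h1 i))
          (funext fun j => congrArg Prod.snd (congrFun h2 j)))
      funext k
      exact Prod.ext (congrFun eX' k) (congrFun eY' k)
    · intro w
      obtain ⟨a, b⟩ := w
      obtain ⟨x, hx⟩ := hX2.2 ((fun i => (a i).1), (fun j => (b j).1))
      obtain ⟨y, hy⟩ := hY2.2 ((fun i => (a i).2), (fun j => (b j).2))
      have hx1 := congrArg Prod.fst hx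
      have hx2 := congrArg Prod.snd hx
      have hy1 := congrArg Prod.fst hy
      have hy2 := congrArg Prod.snd hy
      simp only at hx1 hx2 hy1 hy2
      refine ⟨fun k => (x k, y k), ?_⟩
      refine Prod.ext ?_ ?_
      · funext i
        exact Prod.ext (congrFun hx1 i) (congrFun hy1 i)
      · funext j
        exact Prod.ext (congrFun hx2 j) (congrFun hy2 j)
end

section
/- For every integer n ≥ 3 with n ≢ 2 (mod 4) and every positive integer s, there exists a (1,s,n)-AONT, i.e., a bijection φ : X^s → X^s on a finite set X of size n such that for every i, j ∈ {1,…,s}, the map sending x ∈ X^s to the pair consisting of x_i and (φ(x)_k)_{k ≠ j} is a bijection from X^s to X × X^{s−1}. -/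
/-- Chain lemma: if `z` takes equal values across each step in `(a, b]`, then
`z a = z b`. -/
lemma fin_chain {α : Type*} {m : ℕ} (z : Fin (m + 1) → α) :
    ∀ b a : Fin (m + 1), a ≤ b →
      (∀ t : Fin m, a ≤ t.castSucc → t.succ ≤ b → z t.succ = z t.castSucc) →
      z a = z b := by
  intro b
  induction b using Fin.induction with
  | zero =>
    intro a ha _
    have : a = 0 := le_antisymm ha (Fin.zero_le a)
    rw [this]
  | succ t ih =>
    intro a ha H
    by_cases hat : a ≤ t.castSucc
    · have h1 := ih a hat (fun t' h1' h2' => H t' h1' (h2'.trans (Fin.castSucc_le_succ t)))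
      rw [h1]
      exact (H t hat le_rfl).symm
    · have : a = t.succ :=
        le_antisymm ha (Fin.castSucc_lt_iff_succ_le.mp (not_le.mp hat))
      rw [this]

/-- The main construction: over any finite commutative ring `R` with a unit `u`
such that `u - 1` is also a unit, there is a `(1, m+1, |R|)`-AONT. -/
lemma main_aont {R : Type*} [CommRing R] [Fintype R] (m : ℕ) (u v d : R)
    (hv : u * v = 1) (hd : (u - 1) * d = 1) :
    ∃ φ : (Fin (m + 1) → R) → (Fin (m + 1) → R), IsAONT 1 φ := by
  set φ : (Fin (m + 1) → R) → (Fin (m + 1) → R) := fun b =>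
    Fin.cons (d * b 0 + (v - d) * b (Fin.last m))
      (fun k => d * (b k.succ - b k.castSucc)) with hφdef
  have hφ0 : ∀ b, φ b 0 = d * b 0 + (v - d) * b (Fin.last m) := fun b => rfl
  have hφs : ∀ b (k : Fin m), φ b k.succ = d * (b k.succ - b k.castSucc) :=
    fun b k => by simp [hφdef, Fin.cons_succ]
  have hlin : ∀ (x y : Fin (m + 1) → R) (k : Fin (m + 1)),
      φ x k - φ y k = φ (fun t => x t - y t) k := by
    intro x y k
    induction k using Fin.cases with
    | zero => simp only [hφdef, Fin.cons_zero]; ring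
    | succ k => simp only [hφdef, Fin.cons_succ]; ring
  -- key vanishing lemma
  have L1 : ∀ (z : Fin (m + 1) → R) (i j : Fin (m + 1)), z i = 0 →
      (∀ k, k ≠ j → φ z k = 0) → ∀ k, z k = 0 := by
    intro z i j hzi H k
    have step : ∀ t : Fin m, t.succ ≠ j → z t.succ = z t.castSucc := by
      intro t ht
      have h := H t.succ ht
      rw [hφs] at h
      linear_combination (u - 1) * h - (z t.succ - z t.castSucc) * hd
    by_cases hj : j = 0
    · subst hj
      have hconst : ∀ a b : Fin (m + 1), a ≤ b → z a = z b :=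
        fun a b hab => fin_chain z b a hab (fun t _ _ => step t (Fin.succ_ne_zero t))
      rcases le_total i k with h | h
      · rw [← hconst i k h]; exact hzi
      · rw [hconst k i h]; exact hzi
    · have h0 := H 0 (fun h => hj h.symm)
      rw [hφ0] at h0
      have low : ∀ a b : Fin (m + 1), a ≤ b → b < j → z a = z b := by
        intro a b hab hbj
        refine fin_chain z b a hab (fun t h1 h2 => step t (fun hEq => ?_))
        rw [hEq] at h2
        exact absurd (lt_of_le_of_lt h2 hbj) (lt_irrefl j)
      have high : ∀ a b : Fin (m + 1), a ≤ b → j ≤ a → z a = z b := by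
        intro a b hab hja
        refine fin_chain z b a hab (fun t h1 h2 => step t (fun hEq => ?_))
        have h3 : t.castSucc < t.succ := by
          simp only [Fin.lt_def, Fin.coe_castSucc, Fin.val_succ]; omega
        have := lt_of_le_of_lt (le_trans hja h1) h3
        rw [hEq] at this
        exact absurd this (lt_irrefl j)
      have hboth : z 0 = 0 ∧ z (Fin.last m) = 0 := by
        rcases lt_or_ge i j with hij | hij
        · have h00 : z 0 = 0 := by rw [low 0 i (Fin.zero_le i) hij]; exact hzi
          have hl : z (Fin.last m) = 0 := by
            linear_combination (-(u * (u - 1))) * h0 + (u * (u - 1) * d) * h00 +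
              ((u - 1) * z (Fin.last m)) * hv + (-(u * z (Fin.last m))) * hd
          exact ⟨h00, hl⟩
        · have hl : z (Fin.last m) = 0 := by
            rw [← high i (Fin.last m) (Fin.le_last i) hij]; exact hzi
          have h00 : z 0 = 0 := by
            linear_combination (u - 1) * h0 + (-((u - 1) * (v - d))) * hl + (-(z 0)) * hd
          exact ⟨h00, hl⟩
      rcases lt_or_ge k j with hkj | hkj
      · rw [← low 0 k (Fin.zero_le k) hkj]; exact hboth.1
      · rw [high k (Fin.last m) (Fin.le_last k) hkj]; exact hboth.2
  have hinj : Function.Injective φ := by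
    intro x y hxy
    set z : Fin (m + 1) → R := fun t => x t - y t with hz
    have hz0 : ∀ k, φ z k = 0 := by
      intro k
      rw [← hlin x y k, hxy]; ring
    have step : ∀ t : Fin m, z t.succ = z t.castSucc := by
      intro t
      have h := hz0 t.succ
      rw [hφs] at h
      linear_combination (u - 1) * h - (z t.succ - z t.castSucc) * hd
    have hc : z 0 = z (Fin.last m) :=
      fin_chain z (Fin.last m) 0 (Fin.zero_le _) (fun t _ _ => step t)
    have h0 := hz0 0
    rw [hφ0] at h0
    have hz00 : z 0 = 0 := by
      linear_combination u * h0 + (u * v - u * d) * hc + (-(z 0)) * hv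
    funext t
    have ht : z t = 0 := by
      rcases le_total (0 : Fin (m + 1)) t with h | h
      · rw [← fin_chain z t 0 h (fun t' _ _ => step t')]; exact hz00
      · rw [fin_chain z 0 t h (fun t' _ _ => step t')]; exact hz00
    exact sub_eq_zero.mp ht
  refine ⟨φ, Finite.injective_iff_bijective.mp hinj, ?_⟩
  intro I J hI hJ
  obtain ⟨i, rfl⟩ := Finset.card_eq_one.mp hI
  obtain ⟨j, rfl⟩ := Finset.card_eq_one.mp hJ
  rw [Fintype.bijective_iff_injective_and_card]
  constructor
  · intro x y hxy
    have h1 : x i = y i :=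
      congrArg (fun f => f ⟨i, Finset.mem_singleton_self i⟩) (congrArg Prod.fst hxy)
    have h2 : ∀ k, k ≠ j → φ x k = φ y k := by
      intro k hk
      exact congrArg (fun f => f ⟨k, by simp [hk]⟩) (congrArg Prod.snd hxy)
    have hz := L1 (fun t => x t - y t) i j (by show x i - y i = 0; rw [h1]; ring)
      (fun k hk => by rw [← hlin, h2 k hk]; ring)
    funext t
    exact sub_eq_zero.mp (hz t)
  · simp only [Fintype.card_prod, Fintype.card_fun, Fintype.card_coe,
      Finset.card_singleton, Fintype.card_subtype_compl, Fintype.card_fin, pow_one]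
    rw [Nat.add_sub_cancel, ← pow_succ']

/-- Transport an AONT along an equivalence of alphabets. -/
lemma IsAONT.transport {X Y : Type*} {s t : ℕ} (e : X ≃ Y)
    {φ : (Fin s → X) → (Fin s → X)} (h : IsAONT t φ) :
    IsAONT t (fun y k => e (φ (fun k' => e.symm (y k')) k)) := by
  obtain ⟨hbij, hpair⟩ := h
  have e1 : Function.Bijective (fun (y : Fin s → Y) (k : Fin s) => e.symm (y k)) :=
    (Equiv.piCongrRight fun _ => e.symm).bijective
  have e2 : Function.Bijective (fun (x : Fin s → X) (k : Fin s) => e (x k)) :=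
    (Equiv.piCongrRight fun _ => e).bijective
  constructor
  · exact e2.comp (hbij.comp e1)
  · intro I J hI hJ
    have hcomp := hpair I J hI hJ
    have e3 : Function.Bijective
        (fun p : ({i : Fin s // i ∈ I} → X) × ({j : Fin s // j ∉ J} → X) =>
          ((fun i => e (p.1 i)), (fun j => e (p.2 j)))) :=
      (Equiv.prodCongr (Equiv.piCongrRight fun _ => e)
        (Equiv.piCongrRight fun _ => e)).bijective
    have key : (fun y : Fin s → Y =>
        ((fun i : {i : Fin s // i ∈ I} => y i.1),
         (fun j : {j : Fin s // j ∉ J} =>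
           (fun y k => e (φ (fun k' => e.symm (y k')) k)) y j.1)))
      = (fun p : ({i : Fin s // i ∈ I} → X) × ({j : Fin s // j ∉ J} → X) =>
           ((fun i => e (p.1 i)), (fun j => e (p.2 j))))
        ∘ (fun x : Fin s → X =>
            ((fun i : {i : Fin s // i ∈ I} => x i.1),
             (fun j : {j : Fin s // j ∉ J} => φ x j.1)))
        ∘ (fun (y : Fin s → Y) (k' : Fin s) => e.symm (y k')) := by
      funext y
      simp [Function.comp]
    rw [key]
    exact e3.comp (hcomp.comp e1)

/-- For every integer n ≥ 3 with n ≢ 2 (mod 4) and every positive integer s there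
exists a (1,s,n)-AONT. -/
theorem exists_1_s_n_AONT (n s : ℕ) (hn : 3 ≤ n) (hmod : n % 4 ≠ 2) (hs : 1 ≤ s) :
    ∃ φ : (Fin s → Fin n) → (Fin s → Fin n), IsAONT 1 φ := by
  obtain ⟨m, rfl⟩ : ∃ m, s = m + 1 := ⟨s - 1, by omega⟩
  by_cases ho : n % 2 = 1
  · -- odd case: use ZMod n with u = 2
    haveI : NeZero n := ⟨by omega⟩
    have hu : IsUnit (2 : ZMod n) := by
      have h2 : ((2 : ℕ) : ZMod n) = (2 : ZMod n) := by norm_cast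
      rw [← h2, ZMod.isUnit_iff_coprime]
      exact Nat.coprime_two_left.mpr ⟨n / 2, by omega⟩
    obtain ⟨v, hv⟩ := hu.exists_right_inv
    have hd : ((2 : ZMod n) - 1) * 1 = 1 := by ring
    obtain ⟨φ0, hφ0⟩ := main_aont m (2 : ZMod n) v 1 hv hd
    have e : ZMod n ≃ Fin n := Fintype.equivFinOfCardEq (ZMod.card n)
    exact ⟨_, hφ0.transport e⟩
  · -- n ≡ 0 mod 4
    have hn0 : n ≠ 0 := by omega
    have h4 : n % 4 = 0 := by omega
    set a := n.factorization 2 with ha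
    set k := n / 2 ^ a with hk
    have hsplit : 2 ^ a * k = n := Nat.ordProj_mul_ordCompl_eq_self n 2
    have hodd : ¬ 2 ∣ k := Nat.not_dvd_ordCompl Nat.prime_two hn0
    have ha2 : 2 ≤ a := by
      have h22 : (2 : ℕ) ^ 2 ∣ n := by
        have : (4 : ℕ) ∣ n := Nat.dvd_of_mod_eq_zero h4
        simpa using this
      exact (Nat.Prime.pow_dvd_iff_le_factorization Nat.prime_two hn0).mp h22
    have hk0 : k ≠ 0 := by
      intro h; rw [h, mul_zero] at hsplit; omega
    haveI : NeZero k := ⟨hk0⟩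
    haveI : Fintype (GaloisField 2 a) := Fintype.ofFinite _
    have hcardGF : Fintype.card (GaloisField 2 a) = 2 ^ a := by
      rw [← Nat.card_eq_fintype_card]
      exact GaloisField.card 2 a (by omega)
    -- find w ≠ 0, w ≠ 1 in GaloisField 2 a
    obtain ⟨w, hw0, hw1⟩ : ∃ w : GaloisField 2 a, w ≠ 0 ∧ w ≠ 1 := by
      classical
      by_contra hcon
      push_neg at hcon
      have hsub : (Finset.univ : Finset (GaloisField 2 a)) ⊆ {0, 1} := by
        intro x _
        by_cases hx : x = 0
        · simp [hx]
        · simp [hcon x hx]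
      have hle := Finset.card_le_card hsub
      have h2 : ({0, 1} : Finset (GaloisField 2 a)).card ≤ 2 :=
        Finset.card_insert_le _ _ |>.trans (by simp)
      rw [Finset.card_univ, hcardGF] at hle
      have : 2 ^ 2 ≤ 2 ^ a := Nat.pow_le_pow_right (by norm_num) ha2
      omega
    have hu2 : IsUnit (2 : ZMod k) := by
      have h2 : ((2 : ℕ) : ZMod k) = (2 : ZMod k) := by norm_cast
      rw [← h2, ZMod.isUnit_iff_coprime]
      refine Nat.coprime_two_left.mpr ?_
      rcases Nat.even_or_odd k with he | hodd'
      · exact absurd he.two_dvd hodd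
      · exact hodd'
    obtain ⟨v2, hv2⟩ := hu2.exists_right_inv
    have hcardR : Fintype.card (GaloisField 2 a × ZMod k) = n := by
      rw [Fintype.card_prod, hcardGF, ZMod.card, hsplit]
    -- unit u = (w, 2) with u - 1 = (w - 1, 1) a unit
    have hGFu : w * w⁻¹ = 1 := mul_inv_cancel₀ hw0
    have hGFu1 : (w - 1) * (w - 1)⁻¹ = 1 := mul_inv_cancel₀ (sub_ne_zero.mpr hw1)
    have hone : (1 : GaloisField 2 a × ZMod k) = ((1 : GaloisField 2 a), (1 : ZMod k)) := rfl
    obtain ⟨φ0, hφ0⟩ := main_aont (R := GaloisField 2 a × ZMod k) m (w, 2) (w⁻¹, v2)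
      ((w - 1)⁻¹, 1)
      (by rw [Prod.mk_mul_mk, hGFu, hv2]; exact hone.symm)
      (by
        rw [hone, Prod.mk_sub_mk, Prod.mk_mul_mk]
        simp only [Prod.mk.injEq]
        exact ⟨hGFu1, by ring⟩)
    have e : GaloisField 2 a × ZMod k ≃ Fin n := Fintype.equivFinOfCardEq hcardR
    exact ⟨_, hφ0.transport e⟩
end

section
/- Let X be a finite set with |X| = v and suppose there exists an orthogonal array OA(2,4,v), that is, a function C from a set R of size v^2 to X^4 such that for every pair of distinct coordinates c₁, c₂ ∈ {1,2,3,4}, the map sending r ∈ R to (C(r)_{c₁}, C(r)_{c₂}) is a bijection from R to X × X. Then there exists a (2,3,v)-AONT on X. -/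
/-- If there exists an orthogonal array OA(2,4,v) over X (|X| = v), then there exists a
(2,3,v)-AONT on X. -/
theorem AONT_from_OA
    (X : Type*) [Fintype X] (v : ℕ) (hX : Fintype.card X = v)
    (R : Type*) [Fintype R] (hR : Fintype.card R = v ^ 2)
    (C : R → Fin 4 → X)
    (hOA : ∀ c₁ c₂ : Fin 4, c₁ ≠ c₂ →
      Function.Bijective (fun r : R => (C r c₁, C r c₂))) :
    ∃ φ : (Fin 3 → X) → (Fin 3 → X), IsAONT 2 φ := by
  classical
  have h01 := hOA 0 1 (by decide)
  let e01 : R ≃ X × X := Equiv.ofBijective _ h01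
  let f2 : X → X → X := fun a b => C (e01.symm (a, b)) 2
  let f3 : X → X → X := fun a b => C (e01.symm (a, b)) 3
  have hC0 : ∀ a b, C (e01.symm (a, b)) 0 = a := by
    intro a b
    exact congrArg Prod.fst (e01.apply_symm_apply (a, b))
  have hC1 : ∀ a b, C (e01.symm (a, b)) 1 = b := by
    intro a b
    exact congrArg Prod.snd (e01.apply_symm_apply (a, b))
  -- Latin property of the columns
  have key : ∀ c : Fin 4, c = 2 ∨ c = 3 →
      (∀ a : X, Function.Injective (fun b => C (e01.symm (a, b)) c)) ∧
      (∀ b : X, Function.Injective (fun a => C (e01.symm (a, b)) c)) := by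
    intro c hc
    have hc0 : (0 : Fin 4) ≠ c := by rcases hc with h | h <;> subst h <;> decide
    have hc1 : (1 : Fin 4) ≠ c := by rcases hc with h | h <;> subst h <;> decide
    constructor
    · intro a b b' h
      have h0 := (hOA 0 c hc0).1
      have heq : (fun r : R => (C r 0, C r c)) (e01.symm (a, b))
          = (fun r : R => (C r 0, C r c)) (e01.symm (a, b')) := by
        simp only [hC0]
        exact Prod.ext rfl h
      have hr : e01.symm (a, b) = e01.symm (a, b') := h0 heq
      have hb := congrArg (fun r => (e01 r).2) hr
      simpa [e01] using hb
    · intro b a a' h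
      have h1 := (hOA 1 c hc1).1
      have heq : (fun r : R => (C r 1, C r c)) (e01.symm (a, b))
          = (fun r : R => (C r 1, C r c)) (e01.symm (a', b)) := by
        simp only [hC1]
        exact Prod.ext rfl h
      have hr : e01.symm (a, b) = e01.symm (a', b) := h1 heq
      have ha := congrArg (fun r => (e01 r).1) hr
      simpa [e01] using ha
  have L2a := (key 2 (Or.inl rfl)).1
  have L2b := (key 2 (Or.inl rfl)).2
  have L3a := (key 3 (Or.inr rfl)).1
  have L3b := (key 3 (Or.inr rfl)).2
  -- joint bijectivity of (f2, f3)
  have hF : Function.Bijective (fun p : X × X => (C (e01.symm p) 2, C (e01.symm p) 3)) :=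
    (hOA 2 3 (by decide)).comp e01.symm.bijective
  -- the AONT
  set φ : (Fin 3 → X) → (Fin 3 → X) := fun x =>
    ![ f2 (f2 (x 0) (x 1)) (x 2),
       f3 (f2 (x 0) (x 1)) (x 2),
       f2 (f3 (x 0) (x 1)) (x 2) ] with hφdef
  have hφ0 : ∀ x : Fin 3 → X, φ x 0 = f2 (f2 (x 0) (x 1)) (x 2) := fun x => rfl
  have hφ1 : ∀ x : Fin 3 → X, φ x 1 = f3 (f2 (x 0) (x 1)) (x 2) := fun x => rfl
  have hφ2 : ∀ x : Fin 3 → X, φ x 2 = f2 (f3 (x 0) (x 1)) (x 2) := fun x => rfl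
  have hφinj : Function.Injective φ := by
    intro x x' h
    have h0 : f2 (f2 (x 0) (x 1)) (x 2) = f2 (f2 (x' 0) (x' 1)) (x' 2) := by
      rw [← hφ0, ← hφ0, h]
    have h1 : f3 (f2 (x 0) (x 1)) (x 2) = f3 (f2 (x' 0) (x' 1)) (x' 2) := by
      rw [← hφ1, ← hφ1, h]
    have h2 : f2 (f3 (x 0) (x 1)) (x 2) = f2 (f3 (x' 0) (x' 1)) (x' 2) := by
      rw [← hφ2, ← hφ2, h]
    have hpair : ((f2 (x 0) (x 1), x 2) : X × X) = (f2 (x' 0) (x' 1), x' 2) :=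
      hF.1 (Prod.ext h0 h1)
    have hu : f2 (x 0) (x 1) = f2 (x' 0) (x' 1) := congrArg Prod.fst hpair
    have hc : x 2 = x' 2 := congrArg Prod.snd hpair
    rw [← hc] at h2
    have hw : f3 (x 0) (x 1) = f3 (x' 0) (x' 1) := L2b (x 2) h2
    have hpair2 : ((x 0, x 1) : X × X) = (x' 0, x' 1) := hF.1 (Prod.ext hu hw)
    funext i
    fin_cases i
    · exact congrArg Prod.fst hpair2
    · exact congrArg Prod.snd hpair2
    · exact hc
  refine ⟨φ, Finite.injective_iff_bijective.mp hφinj, ?_⟩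
  intro I J hI hJ
  -- extract the missing input coordinate k and the present output coordinate j
  have hIc : Iᶜ.card = 1 := by
    rw [Finset.card_compl, hI]; rfl
  obtain ⟨k, hk⟩ := Finset.card_eq_one.mp hIc
  have hJc : Jᶜ.card = 1 := by
    rw [Finset.card_compl, hJ]; rfl
  obtain ⟨j, hj⟩ := Finset.card_eq_one.mp hJc
  have hjJ : j ∉ J := by
    have : j ∈ Jᶜ := by rw [hj]; exact Finset.mem_singleton_self j
    exact Finset.mem_compl.mp this
  have hmemI : ∀ i : Fin 3, i ≠ k → i ∈ I := by
    intro i hi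
    by_contra hmem
    have : i ∈ Iᶜ := Finset.mem_compl.mpr hmem
    rw [hk] at this
    exact hi (Finset.mem_singleton.mp this)
  rw [Fintype.bijective_iff_injective_and_card]
  constructor
  · intro x x' hxx'
    have hx : ∀ i : Fin 3, i ≠ k → x i = x' i := by
      intro i hi
      exact congrFun (congrArg Prod.fst hxx') ⟨i, hmemI i hi⟩
    have hy : φ x j = φ x' j := congrFun (congrArg Prod.snd hxx') ⟨j, hjJ⟩
    suffices hkk : x k = x' k by
      funext i
      by_cases hik : i = k
      · rw [hik]; exact hkk
      · exact hx i hik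
    have hk3 : k = 0 ∨ k = 1 ∨ k = 2 := by fin_cases k <;> decide
    have hj3 : j = 0 ∨ j = 1 ∨ j = 2 := by fin_cases j <;> decide
    rcases hk3 with rfl | rfl | rfl <;> rcases hj3 with rfl | rfl | rfl <;>
      simp only [hφ0, hφ1, hφ2] at hy
    · -- k = 0, j = 0
      rw [← hx 1 (by decide), ← hx 2 (by decide)] at hy
      exact L2b _ (L2b _ hy)
    · rw [← hx 1 (by decide), ← hx 2 (by decide)] at hy
      exact L2b _ (L3b _ hy)
    · rw [← hx 1 (by decide), ← hx 2 (by decide)] at hy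
      exact L3b _ (L2b _ hy)
    · rw [← hx 0 (by decide), ← hx 2 (by decide)] at hy
      exact L2a _ (L2b _ hy)
    · rw [← hx 0 (by decide), ← hx 2 (by decide)] at hy
      exact L2a _ (L3b _ hy)
    · rw [← hx 0 (by decide), ← hx 2 (by decide)] at hy
      exact L3a _ (L2b _ hy)
    · rw [← hx 0 (by decide), ← hx 1 (by decide)] at hy
      exact L2a _ hy
    · rw [← hx 0 (by decide), ← hx 1 (by decide)] at hy
      exact L3a _ hy
    · rw [← hx 0 (by decide), ← hx 1 (by decide)] at hy
      exact L2a _ hy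
  · have hcardI : Fintype.card {i : Fin 3 // i ∈ I} = 2 := by
      simp [Fintype.card_coe, hI]
    have hcardJ : Fintype.card {j : Fin 3 // j ∉ J} = 1 := by
      have : Fintype.card {j : Fin 3 // j ∈ J} = 2 := by simp [Fintype.card_coe, hJ]
      rw [Fintype.card_subtype_compl, this]
      simp
    rw [Fintype.card_prod, Fintype.card_fun, Fintype.card_fun, Fintype.card_fun,
      hcardI, hcardJ, Fintype.card_fin]
    ring
end
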